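/- arXiv:2506.23098 — 8 statements merged into one kernel-verified Lean document; each statement's English description precedes it below -/
import Mathlib

section
/- Let Z be a complex m×m matrix whose imaginary part Im Z = (Z - Z*)/(2i) is positive definite. Then Z is invertible and ‖Z⁻¹‖ ≤ ‖(Im Z)⁻¹‖ (operator norms). -/
/-!
Write `A = Im Z` and `B = A⁻¹`, a positive operator. Factoring `B = S* S` gives
`‖B w‖² ≤ ‖S‖² ‖S w‖² = ‖B‖ re ⟪w, B w⟫`, and with `w = A x` this is the coercivity
estimate `‖x‖² ≤ ‖B‖ ⟪x, A x⟫ = ‖B‖ Im ⟪x, Z x⟫ ≤ ‖B‖ ‖x‖ ‖Z x‖`.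
So `‖x‖ ≤ ‖B‖ ‖Z x‖`: `Z` is injective, hence invertible, and `‖Z⁻¹‖ ≤ ‖B‖`.
-/

open Matrix
open scoped ComplexOrder

/-- The "imaginary part" `(Z - Z*)/(2i)` of a complex square matrix. -/
noncomputable def matIm {m : ℕ} (Z : Matrix (Fin m) (Fin m) ℂ) :
    Matrix (Fin m) (Fin m) ℂ := (2 * Complex.I)⁻¹ • (Z - Zᴴ)

open scoped InnerProductSpace ComplexStarModule

namespace ContinuousLinearMap

variable {H : Type*} [NormedAddCommGroup H] [InnerProductSpace ℂ H]

theorem inner_imaginaryPart_apply [CompleteSpace H] (T : H →L[ℂ] H) (x : H) :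
    ⟪x, (ℑ T : H →L[ℂ] H) x⟫_ℂ = (⟪x, T x⟫_ℂ).im := by
  rw [imaginaryPart_apply_coe, _root_.smul_apply, _root_.smul_apply, _root_.sub_apply,
    inner_smul_right, inner_smul_right_eq_smul, inner_sub_right, star_eq_adjoint,
    adjoint_inner_right, ← inner_conj_symm (T x) x, Complex.sub_conj, Complex.real_smul]
  push_cast
  linear_combination (-(⟪x, T x⟫_ℂ).im : ℂ) * Complex.I_sq

theorem norm_le_mul_norm_apply_of_sq_le_im_inner (T : H →L[ℂ] H) {K : ℝ} (hK : 0 ≤ K)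
    (h : ∀ x, ‖x‖ ^ 2 ≤ K * (⟪x, T x⟫_ℂ).im) (x : H) : ‖x‖ ≤ K * ‖T x‖ := by
  rcases (norm_nonneg x).eq_or_lt with hx | hx
  · rw [← hx]
    positivity
  · have : ‖x‖ * ‖x‖ ≤ ‖x‖ * (K * ‖T x‖) := calc
      ‖x‖ * ‖x‖ ≤ K * (⟪x, T x⟫_ℂ).im := by simpa only [sq] using h x
      _ ≤ K * (‖x‖ * ‖T x‖) := by
        gcongr
        exact (Complex.im_le_norm _).trans (norm_inner_le_norm x (T x))
      _ = ‖x‖ * (K * ‖T x‖) := by ring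
    exact le_of_mul_le_mul_left this hx

theorem IsPositive.norm_apply_sq_le [CompleteSpace H] {B : H →L[ℂ] H} (hB : B.IsPositive)
    (x : H) : ‖B x‖ ^ 2 ≤ ‖B‖ * RCLike.re ⟪x, B x⟫_ℂ := by
  obtain ⟨S, rfl⟩ :=
    CStarAlgebra.nonneg_iff_eq_star_mul_self.mp ((nonneg_iff_isPositive B).mpr hB)
  calc ‖(star S * S) x‖ ^ 2 ≤ (‖star S‖ * ‖S x‖) ^ 2 := by
        gcongr
        exact (star S).le_opNorm (S x)
    _ = ‖star S * S‖ * ‖S x‖ ^ 2 := by rw [norm_star, CStarRing.norm_star_mul_self]; ring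
    _ = ‖star S * S‖ * RCLike.re ⟪x, (star S * S) x⟫_ℂ := by
        rw [mul_apply_eq_comp, star_eq_adjoint, adjoint_inner_right, inner_self_eq_norm_sq]

end ContinuousLinearMap

namespace Matrix

variable {n : Type*} [Fintype n] [DecidableEq n]

theorem toEuclideanCLM_apply_toEuclideanCLM_of_mul_eq_one {𝕜 : Type*} [RCLike 𝕜]
    {M N : Matrix n n 𝕜} (hMN : M * N = 1) (x : EuclideanSpace 𝕜 n) :
    toEuclideanCLM (𝕜 := 𝕜) M (toEuclideanCLM (𝕜 := 𝕜) N x) = x := by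
  rw [← mul_apply_eq_comp, ← map_mul, hMN, map_one, one_apply_eq_self]

theorem isUnit_and_norm_toEuclideanCLM_inv_le {Z : Matrix n n ℂ} {K : ℝ} (hK : 0 ≤ K)
    (h : ∀ x, ‖x‖ ≤ K * ‖toEuclideanCLM (𝕜 := ℂ) Z x‖) :
    IsUnit Z ∧ ‖toEuclideanCLM (𝕜 := ℂ) Z⁻¹‖ ≤ K := by
  have hinj : Function.Injective (toEuclideanCLM (𝕜 := ℂ) Z) :=
    (injective_iff_map_eq_zero _).mpr fun x hx ↦ norm_le_zero_iff.mp (by simpa [hx] using h x)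
  have hZ : IsUnit Z := mulVec_injective_iff_isUnit.mp fun x y hxy ↦
    WithLp.toLp_injective 2 (hinj (by simp only [toEuclideanCLM_toLp, hxy]))
  refine ⟨hZ, (toEuclideanCLM (𝕜 := ℂ) Z⁻¹).opNorm_le_bound hK fun x ↦ ?_⟩
  simpa only [toEuclideanCLM_apply_toEuclideanCLM_of_mul_eq_one
    (mul_nonsing_inv Z ((isUnit_iff_isUnit_det Z).mp hZ))] using h (toEuclideanCLM (𝕜 := ℂ) Z⁻¹ x)

theorem toEuclideanCLM_matIm {m : ℕ} (Z : Matrix (Fin m) (Fin m) ℂ) :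
    toEuclideanCLM (𝕜 := ℂ) (matIm Z) = ℑ (toEuclideanCLM (𝕜 := ℂ) Z) := by
  rw [imaginaryPart_apply_coe, matIm, map_smul, map_sub, ← star_eq_conjTranspose, map_star,
    ← Complex.coe_smul, smul_smul]
  congr 1
  field_simp
  push_cast
  linear_combination Complex.I_sq

end Matrix

/-- If `Im Z` is positive definite then `Z` is invertible and
`‖Z⁻¹‖ ≤ ‖(Im Z)⁻¹‖` in the operator norm induced by the Euclidean norm. -/
theorem stmt1 {m : ℕ} (Z : Matrix (Fin m) (Fin m) ℂ) (hZ : (matIm Z).PosDef) :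
    IsUnit Z ∧
      ‖Matrix.toEuclideanCLM (𝕜 := ℂ) Z⁻¹‖ ≤
        ‖Matrix.toEuclideanCLM (𝕜 := ℂ) (matIm Z)⁻¹‖ := by
  set T := toEuclideanCLM (𝕜 := ℂ) Z
  set A := toEuclideanCLM (𝕜 := ℂ) (matIm Z)
  set B := toEuclideanCLM (𝕜 := ℂ) (matIm Z)⁻¹
  have hB : B.IsPositive := isPositive_toEuclideanLin_iff.mpr hZ.inv.posSemidef
  have hBA : ∀ x, B (A x) = x := toEuclideanCLM_apply_toEuclideanCLM_of_mul_eq_one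
    (nonsing_inv_mul _ ((isUnit_iff_isUnit_det _).mp hZ.isUnit))
  have hcoercive : ∀ x, ‖x‖ ^ 2 ≤ ‖B‖ * (⟪x, T x⟫_ℂ).im := fun x ↦ by
    have h := hB.norm_apply_sq_le (A x)
    rw [hBA, inner_re_symm] at h
    simpa only [A, toEuclideanCLM_matIm, ContinuousLinearMap.inner_imaginaryPart_apply,
      RCLike.re_to_complex, Complex.ofReal_re] using h
  exact isUnit_and_norm_toEuclideanCLM_inv_le (norm_nonneg B)
    (T.norm_le_mul_norm_apply_of_sq_le_im_inner (norm_nonneg B) hcoercive)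
end

section
/- Let X and Y be complex m×m matrices with Im X and Im Y positive definite. Then Im(X(X+Y)⁻¹Y) = Y(X+Y)⁻¹ Im(X) ((X+Y)*)⁻¹ Y* + X(X+Y)⁻¹ Im(Y) ((X+Y)*)⁻¹ X*. -/
open Matrix
open scoped ComplexOrder

/-!
With `a = (x + y)⁻¹`, the product `x a y` equals `y a x`: both are `x - x a x`. Expanding the
right-hand side of the identity and using this commutation (and its adjoint) regroups it into
`x a y · (x + y)*⁻¹ (x + y)* - (x + y) a · (x a y)*`, i.e. `x a y - (x a y)*`. Scaling by `(2i)⁻¹`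
gives the statement; invertibility of `X + Y` holds because `Im (X + Y) = Im X + Im Y` is
positive definite and `Im Z` vanishes on the kernel of `Z`.
-/

section Ring

open scoped Ring

variable {R : Type*} [Ring R]

theorem mul_inverse_add_mul_comm {x y : R} (h : IsUnit (x + y)) :
    x * (x + y)⁻¹ʳ * y = y * (x + y)⁻¹ʳ * x := by
  have hy : y = (x + y) - x := by abel
  calc x * (x + y)⁻¹ʳ * y = x * ((x + y)⁻¹ʳ * (x + y)) - x * (x + y)⁻¹ʳ * x := by
        conv_lhs => rw [hy]
        noncomm_ring
    _ = (x + y) * (x + y)⁻¹ʳ * x - x * (x + y)⁻¹ʳ * x := by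
        rw [Ring.inverse_mul_cancel _ h, Ring.mul_inverse_cancel _ h, mul_one, one_mul]
    _ = y * (x + y)⁻¹ʳ * x := by noncomm_ring

theorem mul_inverse_add_mul_sub_star [StarRing R] {x y : R} (h : IsUnit (x + y)) :
    x * (x + y)⁻¹ʳ * y - star (x * (x + y)⁻¹ʳ * y) =
      y * (x + y)⁻¹ʳ * (x - star x) * star (x + y)⁻¹ʳ * star y +
        x * (x + y)⁻¹ʳ * (y - star y) * star (x + y)⁻¹ʳ * star x := by
  set a := (x + y)⁻¹ʳ
  have hcomm : y * a * x = x * a * y := (mul_inverse_add_mul_comm h).symm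
  have hcomm_star : star x * star a * star y = star y * star a * star x := by
    simpa only [star_mul, mul_assoc] using congrArg star hcomm
  have hright : star a * (star x + star y) = 1 := by
    rw [← star_add, ← star_mul, Ring.mul_inverse_cancel _ h, star_one]
  have hleft : (x + y) * a = 1 := Ring.mul_inverse_cancel _ h
  symm
  calc _ = y * a * x * star a * star y + x * a * y * star a * star x -
          (y * a * (star x * star a * star y) + x * a * (star y * star a * star x)) := by
        noncomm_ring
    _ = x * a * y * (star a * (star x + star y)) - (x + y) * a * (star y * star a * star x) := by
        rw [hcomm, hcomm_star]
        noncomm_ring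
    _ = x * a * y - star (x * a * y) := by
        rw [hright, hleft, star_mul, star_mul]
        noncomm_ring

end Ring

theorem matIm_add {m : ℕ} (X Y : Matrix (Fin m) (Fin m) ℂ) :
    matIm (X + Y) = matIm X + matIm Y := by
  simp only [matIm, conjTranspose_add, ← smul_add]
  abel_nf

theorem isUnit_of_posDef_matIm {m : ℕ} {Z : Matrix (Fin m) (Fin m) ℂ}
    (h : (matIm Z).PosDef) : IsUnit Z := by
  by_contra hZ
  rw [isUnit_iff_isUnit_det, isUnit_iff_ne_zero, not_not, ← exists_mulVec_eq_zero_iff] at hZ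
  obtain ⟨v, hv0, hv⟩ := hZ
  have hvZ : star v ⬝ᵥ (Zᴴ *ᵥ v) = 0 := by
    rw [dotProduct_mulVec, ← star_mulVec, hv, star_zero, zero_dotProduct]
  have hquad : star v ⬝ᵥ (matIm Z *ᵥ v) = 0 := by
    rw [matIm, smul_mulVec, sub_mulVec, dotProduct_smul, dotProduct_sub, hv, hvZ,
      dotProduct_zero, sub_zero, smul_zero]
  exact (h.dotProduct_mulVec_pos hv0).ne' hquad

/-- If `Im X` and `Im Y` are positive definite, then
`Im(X(X+Y)⁻¹Y) = Y(X+Y)⁻¹ Im(X) ((X+Y)*)⁻¹ Y* + X(X+Y)⁻¹ Im(Y) ((X+Y)*)⁻¹ X*`. -/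
theorem stmt4 {m : ℕ} (X Y : Matrix (Fin m) (Fin m) ℂ)
    (hX : (matIm X).PosDef) (hY : (matIm Y).PosDef) :
    matIm (X * (X + Y)⁻¹ * Y) =
      Y * (X + Y)⁻¹ * matIm X * ((X + Y)ᴴ)⁻¹ * Yᴴ +
        X * (X + Y)⁻¹ * matIm Y * ((X + Y)ᴴ)⁻¹ * Xᴴ := by
  have hXY : IsUnit (X + Y) := isUnit_of_posDef_matIm (by rw [matIm_add]; exact hX.add hY)
  rw [← conjTranspose_nonsing_inv, nonsing_inv_eq_ringInverse]
  simp only [matIm, ← star_eq_conjTranspose, Matrix.mul_smul, Matrix.smul_mul, ← smul_add]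
  rw [mul_inverse_add_mul_sub_star hXY]
end

section
/- The doubled Schrödinger cocycle is strictly monotonic in energy: let C ∈ GL(m,ℂ), V₁, V₂ ∈ Her(m,ℂ), S = [[0,-C*],[C,0]], ψ(X,Y) = X*SY, and A_E(V) = [[C⁻¹(E·I - V), -C⁻¹C*],[I,0]]. Define B_E = A_E(V₂)·A_E(V₁). Then for every nonzero v ∈ ℂ^{2m}, ψ((d/dE) B_E · v, B_E · v) = -‖v₁‖² - ‖w₁‖² < 0, where v = (v₁, v₂)ᵀ and w = (w₁, w₂)ᵀ = A_E(V₁) v. -/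
open Matrix

/-- The transfer matrix `A_E(V) = [[C⁻¹(E·I - V), -C⁻¹C*],[I, 0]]`. -/
noncomputable def transferMat {m : ℕ} (C V : Matrix (Fin m) (Fin m) ℂ) (E : ℝ) :
    Matrix (Fin m ⊕ Fin m) (Fin m ⊕ Fin m) ℂ :=
  Matrix.fromBlocks
    (C⁻¹ * ((E : ℂ) • (1 : Matrix (Fin m) (Fin m) ℂ) - V)) (-(C⁻¹ * Cᴴ)) 1 0

/-!
Write `S` for the matrix of `ψ`, `D = (d/dE) A_E = [[C⁻¹, 0], [0, 0]]` and `K = [[I, 0], [0, 0]]`.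
Two block computations drive the proof: `A_E(V)* S A_E(V) = S` for Hermitian `V` (the transfer
matrix is `S`-unitary), and `D* S A_E(V) = -K` for every `V`. Since `B' = D A₁ + A₂ D` by the
product rule, they give `B'* S B = -(A₁* K A₁ + K)`, whose quadratic form at `v` is
`-‖v₁‖² - ‖w₁‖²`. If `v₁ = 0` then `w₁ = -C⁻¹C* v₂`, so both vanishing forces `v = 0`.
-/

namespace Matrix

theorem hasDerivAt_mul_apply {l n p 𝔸 : Type*} [Fintype n] [NormedRing 𝔸] [NormedAlgebra ℝ 𝔸]
    {f : ℝ → Matrix l n 𝔸} {g : ℝ → Matrix n p 𝔸} {f' : Matrix l n 𝔸} {g' : Matrix n p 𝔸}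
    {x : ℝ} (hf : ∀ i j, HasDerivAt (fun t => f t i j) (f' i j) x)
    (hg : ∀ j k, HasDerivAt (fun t => g t j k) (g' j k) x) (i : l) (k : p) :
    HasDerivAt (fun t => (f t * g t) i k) ((f' * g x + f x * g') i k) x := by
  simp only [mul_apply, add_apply, ← Finset.sum_add_distrib]
  exact HasDerivAt.fun_sum fun j _ => (hf i j).mul (hg j k)

theorem star_mulVec_dotProduct_mulVec {m n p α : Type*} [Fintype m] [Fintype n] [Fintype p]
    [NonUnitalSemiring α] [StarRing α] (M : Matrix m n α) (N : Matrix m p α) (v : n → α)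
    (w : p → α) : star (M *ᵥ v) ⬝ᵥ N *ᵥ w = star v ⬝ᵥ (Mᴴ * N) *ᵥ w := by
  rw [star_mulVec, ← dotProduct_mulVec, mulVec_mulVec]

theorem star_dotProduct_fromBlocks_one_zero_mulVec {m n : Type*} [Fintype m] [Fintype n]
    [DecidableEq m] (w : m ⊕ n → ℂ) :
    star w ⬝ᵥ fromBlocks 1 0 0 0 *ᵥ w = ((∑ i, ‖w (Sum.inl i)‖ ^ 2 : ℝ) : ℂ) := by
  simp [fromBlocks_mulVec, dotProduct, Fintype.sum_sum_type, Complex.conj_mul']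

end Matrix

theorem sum_norm_sq_eq_zero_iff {ι 𝕜 : Type*} [Fintype ι] [RCLike 𝕜] {x : ι → 𝕜} :
    ∑ i, ‖x i‖ ^ 2 = 0 ↔ x = 0 := by
  simp [Finset.sum_eq_zero_iff_of_nonneg, funext_iff]

namespace transferMat

variable {m : ℕ} (C V : Matrix (Fin m) (Fin m) ℂ)

-- `S`, the matrix of the form `ψ(X, Y) = X* S Y`.
def form : Matrix (Fin m ⊕ Fin m) (Fin m ⊕ Fin m) ℂ := fromBlocks 0 (-Cᴴ) C 0

noncomputable def energyDeriv : Matrix (Fin m ⊕ Fin m) (Fin m ⊕ Fin m) ℂ := fromBlocks C⁻¹ 0 0 0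

theorem eq_add_smul_energyDeriv (E : ℝ) :
    transferMat C V E =
      fromBlocks (-(C⁻¹ * V)) (-(C⁻¹ * Cᴴ)) 1 0 + (E : ℂ) • energyDeriv C := by
  rw [transferMat, energyDeriv, fromBlocks_smul, fromBlocks_add]
  simp only [mul_sub, Matrix.mul_smul, mul_one, smul_zero, add_zero, neg_add_eq_sub]

theorem hasDerivAt_apply (E : ℝ) (i j : Fin m ⊕ Fin m) :
    HasDerivAt (fun E => transferMat C V E i j) (energyDeriv C i j) E := by
  simp only [eq_add_smul_energyDeriv, Matrix.add_apply, Matrix.smul_apply, smul_eq_mul]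
  simpa using ((hasDerivAt_id E).ofReal_comp.mul_const (energyDeriv C i j)).const_add
    (fromBlocks (-(C⁻¹ * V)) (-(C⁻¹ * Cᴴ)) 1 0 i j)

variable {C}

theorem conjTranspose_energyDeriv_mul_form_mul (hC : IsUnit C) (E : ℝ) :
    (energyDeriv C)ᴴ * (form C * transferMat C V E) = -fromBlocks 1 0 0 0 := by
  have hCinv : C⁻¹ᴴ * Cᴴ = 1 := by
    rw [← conjTranspose_mul, mul_nonsing_inv C ((isUnit_iff_isUnit_det C).mp hC),
      conjTranspose_one]
  simp only [transferMat, energyDeriv, form, fromBlocks_multiply, fromBlocks_conjTranspose,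
    conjTranspose_zero, fromBlocks_neg]
  congr 1 <;> simp [mul_neg, ← mul_assoc, hCinv]

theorem conjTranspose_mul_form_mul_self (hC : IsUnit C) {V : Matrix (Fin m) (Fin m) ℂ}
    (hV : Vᴴ = V) (E : ℝ) :
    (transferMat C V E)ᴴ * (form C * transferMat C V E) = form C := by
  have hdet := (isUnit_iff_isUnit_det C).mp hC
  have hCinv : C⁻¹ᴴ * Cᴴ = 1 := by
    rw [← conjTranspose_mul, mul_nonsing_inv C hdet, conjTranspose_one]
  have hEV : ((E : ℂ) • (1 : Matrix (Fin m) (Fin m) ℂ) - V)ᴴ = (E : ℂ) • 1 - V := by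
    simp [conjTranspose_sub, conjTranspose_smul, hV]
  simp only [transferMat, form, fromBlocks_multiply, fromBlocks_conjTranspose,
    conjTranspose_neg, conjTranspose_mul, conjTranspose_one, conjTranspose_zero, hEV]
  congr 1 <;> simp [mul_assoc, mul_neg, neg_mul, hCinv, mul_nonsing_inv_cancel_left _ _ hdet]

theorem hasDerivAt_mul_apply (V₁ V₂ : Matrix (Fin m) (Fin m) ℂ) (E : ℝ) (i j : Fin m ⊕ Fin m) :
    HasDerivAt (fun E => (transferMat C V₂ E * transferMat C V₁ E) i j)
      ((energyDeriv C * transferMat C V₁ E + transferMat C V₂ E * energyDeriv C) i j) E :=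
  Matrix.hasDerivAt_mul_apply (hasDerivAt_apply C V₂ E) (hasDerivAt_apply C V₁ E) i j

theorem conjTranspose_mul_energyDeriv_mul_form_mul (hC : IsUnit C) (V₁ : Matrix (Fin m) (Fin m) ℂ)
    {V₂ : Matrix (Fin m) (Fin m) ℂ} (hV₂ : V₂ᴴ = V₂) (E : ℝ) :
    (energyDeriv C * transferMat C V₁ E + transferMat C V₂ E * energyDeriv C)ᴴ *
        (form C * (transferMat C V₂ E * transferMat C V₁ E)) =
      -((transferMat C V₁ E)ᴴ * fromBlocks 1 0 0 0 * transferMat C V₁ E + fromBlocks 1 0 0 0) := by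
  set A₁ := transferMat C V₁ E
  set A₂ := transferMat C V₂ E
  calc (energyDeriv C * A₁ + A₂ * energyDeriv C)ᴴ * (form C * (A₂ * A₁))
      = A₁ᴴ * ((energyDeriv C)ᴴ * (form C * A₂)) * A₁ +
          (energyDeriv C)ᴴ * (A₂ᴴ * (form C * A₂)) * A₁ := by
        simp only [conjTranspose_add, conjTranspose_mul, add_mul, Matrix.mul_assoc]
    _ = A₁ᴴ * -fromBlocks 1 0 0 0 * A₁ + (energyDeriv C)ᴴ * (form C * A₁) := by
        rw [conjTranspose_energyDeriv_mul_form_mul V₂ hC, conjTranspose_mul_form_mul_self hC hV₂,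
          Matrix.mul_assoc (energyDeriv C)ᴴ]
    _ = _ := by
        rw [conjTranspose_energyDeriv_mul_form_mul V₁ hC, mul_neg, neg_mul, neg_add]

theorem mulVec_inl_of_inl_eq_zero (E : ℝ) {v : Fin m ⊕ Fin m → ℂ} (hv : v ∘ Sum.inl = 0) :
    (transferMat C V E *ᵥ v) ∘ Sum.inl = -(C⁻¹ * Cᴴ) *ᵥ (v ∘ Sum.inr) := by
  ext i
  simp [transferMat, fromBlocks_mulVec, hv]

theorem eq_zero_of_inl_eq_zero_of_mulVec_inl_eq_zero (hC : IsUnit C) (E : ℝ)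
    {v : Fin m ⊕ Fin m → ℂ} (h₁ : v ∘ Sum.inl = 0) (h₂ : (transferMat C V E *ᵥ v) ∘ Sum.inl = 0) :
    v = 0 := by
  have hunit : IsUnit (C⁻¹ * Cᴴ) :=
    (isUnit_nonsing_inv_iff.mpr hC).mul ((isUnit_conjTranspose C).mpr hC)
  have h₃ : v ∘ Sum.inr = 0 := by
    apply mulVec_injective_iff_isUnit.mpr hunit
    rw [mulVec_zero, ← neg_eq_zero, ← neg_mulVec, ← mulVec_inl_of_inl_eq_zero V E h₁, h₂]
  ext (i | i)
  · exact congrFun h₁ i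
  · exact congrFun h₃ i

theorem sum_norm_sq_inl_add_pos (hC : IsUnit C) (E : ℝ) {v : Fin m ⊕ Fin m → ℂ} (hv : v ≠ 0) :
    0 < ∑ i, ‖v (Sum.inl i)‖ ^ 2 + ∑ i, ‖(transferMat C V E *ᵥ v) (Sum.inl i)‖ ^ 2 := by
  refine lt_of_le_of_ne (by positivity) fun h => hv ?_
  rw [eq_comm, add_eq_zero_iff_of_nonneg (by positivity) (by positivity), sum_norm_sq_eq_zero_iff,
    sum_norm_sq_eq_zero_iff] at h
  exact eq_zero_of_inl_eq_zero_of_mulVec_inl_eq_zero V hC E h.1 h.2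

end transferMat

theorem stmt9_general {m : ℕ} (C : Matrix (Fin m) (Fin m) ℂ) (hC : IsUnit C)
    (V₁ V₂ : Matrix (Fin m) (Fin m) ℂ) (hV₂ : V₂ᴴ = V₂)
    (S : Matrix (Fin m ⊕ Fin m) (Fin m ⊕ Fin m) ℂ)
    (hS : S = Matrix.fromBlocks 0 (-Cᴴ) C 0)
    (B : ℝ → Matrix (Fin m ⊕ Fin m) (Fin m ⊕ Fin m) ℂ)
    (hB : ∀ E : ℝ, B E = transferMat C V₂ E * transferMat C V₁ E)
    (E₀ : ℝ) (B' : Matrix (Fin m ⊕ Fin m) (Fin m ⊕ Fin m) ℂ)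
    (hB' : ∀ i j, HasDerivAt (fun E : ℝ => B E i j) (B' i j) E₀)
    (v : (Fin m ⊕ Fin m) → ℂ) :
    star (B'.mulVec v) ⬝ᵥ S.mulVec ((B E₀).mulVec v) =
      -(((∑ i : Fin m, ‖v (Sum.inl i)‖ ^ 2) +
          ∑ i : Fin m, ‖(transferMat C V₁ E₀).mulVec v (Sum.inl i)‖ ^ 2 : ℝ) : ℂ) ∧
    (v ≠ 0 →
      0 < (∑ i : Fin m, ‖v (Sum.inl i)‖ ^ 2) +
        ∑ i : Fin m, ‖(transferMat C V₁ E₀).mulVec v (Sum.inl i)‖ ^ 2) := by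
  obtain rfl : S = transferMat.form C := hS
  have hB'_eq : B' = transferMat.energyDeriv C * transferMat C V₁ E₀ +
      transferMat C V₂ E₀ * transferMat.energyDeriv C := by
    ext i j
    exact (hB' i j).unique
      (by simpa only [hB] using transferMat.hasDerivAt_mul_apply V₁ V₂ E₀ i j)
  refine ⟨?_, transferMat.sum_norm_sq_inl_add_pos V₁ hC E₀⟩
  rw [hB'_eq, hB, mulVec_mulVec, star_mulVec_dotProduct_mulVec,
    transferMat.conjTranspose_mul_energyDeriv_mul_form_mul hC V₁ hV₂,
    neg_mulVec, add_mulVec, dotProduct_neg, dotProduct_add, Matrix.mul_assoc,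
    ← star_mulVec_dotProduct_mulVec, ← mulVec_mulVec, star_dotProduct_fromBlocks_one_zero_mulVec,
    star_dotProduct_fromBlocks_one_zero_mulVec]
  push_cast
  ring

/-- Strict monotonicity in energy of the doubled Schrödinger cocycle
`B_E = A_E(V₂) A_E(V₁)`: for every nonzero `v`,
`ψ((d/dE) B_E v, B_E v) = -‖v₁‖² - ‖w₁‖² < 0` where `w = A_E(V₁) v`. -/
theorem stmt9 {m : ℕ} (C : Matrix (Fin m) (Fin m) ℂ) (hC : IsUnit C)
    (V₁ V₂ : Matrix (Fin m) (Fin m) ℂ) (hV₁ : V₁ᴴ = V₁) (hV₂ : V₂ᴴ = V₂)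
    (S : Matrix (Fin m ⊕ Fin m) (Fin m ⊕ Fin m) ℂ)
    (hS : S = Matrix.fromBlocks 0 (-Cᴴ) C 0)
    (B : ℝ → Matrix (Fin m ⊕ Fin m) (Fin m ⊕ Fin m) ℂ)
    (hB : ∀ E : ℝ, B E = transferMat C V₂ E * transferMat C V₁ E)
    (E₀ : ℝ) (B' : Matrix (Fin m ⊕ Fin m) (Fin m ⊕ Fin m) ℂ)
    (hB' : ∀ i j, HasDerivAt (fun E : ℝ => B E i j) (B' i j) E₀)
    (v : (Fin m ⊕ Fin m) → ℂ) :
    star (B'.mulVec v) ⬝ᵥ S.mulVec ((B E₀).mulVec v) =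
      -(((∑ i : Fin m, ‖v (Sum.inl i)‖ ^ 2) +
          ∑ i : Fin m, ‖(transferMat C V₁ E₀).mulVec v (Sum.inl i)‖ ^ 2 : ℝ) : ℂ) ∧
    (v ≠ 0 →
      0 < (∑ i : Fin m, ‖v (Sum.inl i)‖ ^ 2) +
        ∑ i : Fin m, ‖(transferMat C V₁ E₀).mulVec v (Sum.inl i)‖ ^ 2) :=
  stmt9_general C hC V₁ V₂ hV₂ S hS B hB E₀ B' hB' v
end

section
/- Let H be the self-adjoint finite-range operator on ℓ²(ℤ) given by (Hu)_n = Σ_{|k|≤K} w_k u_{n+k} + v_n u_n with conj(w_{-k}) = w_k and v real bounded. For sequences f, g define W_{[-r,r]}(f,g) = Σ_{n=-r}^{r} [(Hf)_n · conj(g_n) - f_n · conj((Hg)_n)]. Then |Σ_{r=1}^{R} W_{[-r,r]}(f,g)| ≤ (Σ_{j=1}^{K} 4j|w_j|) · ‖f‖_{ℓ²(R+K)} · ‖g‖_{ℓ²(R+K)}, where ‖f‖_{ℓ²(N)}² = Σ_{|n|≤N} |f_n|². -/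
open Finset ComplexConjugate

/-!
The potential term cancels because `v` is real, and the symmetry `conj (w (-k)) = w k` turns
`W_{[-r,r]}(f,g)` into `∑ₖ wₖ (∑_{|n| ≤ r} aₖ n - ∑_{|n+k| ≤ r} aₖ n)` with
`aₖ n = f (n+k) conj (g n)`. Summing over `1 ≤ r ≤ R`, the term `aₖ n` gets the weight
`N |n| - N |n+k|`, where `N x = #{1 ≤ r ≤ R | x ≤ r}` is `1`-Lipschitz, so the weight is at most
`|k|`; and only `n` with `n, n + k ∈ [-(R+K), R+K]` occur. Cauchy–Schwarz bounds the `k`-th term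
by `|k| |wₖ| ‖f‖ ‖g‖`, and `∑_{|k| ≤ K} |k| |wₖ| = 2 ∑_{j=1}^K j |w_j|`.
-/

lemma sum_Icc_neg_symm {M : Type*} [AddCommMonoid M] (K : ℤ) (φ : ℤ → M) :
    ∑ k ∈ Icc (-K) K, φ (-k) = ∑ k ∈ Icc (-K) K, φ k :=
  sum_nbij' (- ·) (- ·) (by simp [and_comm]; omega) (by simp [and_comm]; omega)
    (by simp) (by simp) (by simp)

lemma sum_Icc_abs_mul_of_even (K : ℕ) (φ : ℤ → ℝ) (hφ : ∀ k, φ (-k) = φ k) :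
    ∑ k ∈ Icc (-(K : ℤ)) K, |(k : ℝ)| * φ k = 2 * ∑ j ∈ Icc 1 K, (j : ℝ) * φ j := by
  induction K with
  | zero => simp
  | succ K ih =>
    have hIcc : Icc (-((K + 1 : ℕ) : ℤ)) (K + 1 : ℕ) =
        insert (-((K + 1 : ℕ) : ℤ)) (insert ((K + 1 : ℕ) : ℤ) (Icc (-(K : ℤ)) K)) := by
      ext; simp; omega
    rw [hIcc, sum_insert (by simp; omega), sum_insert (by simp), ih,
      sum_Icc_succ_top (by omega), hφ]
    push_cast
    rw [abs_neg, abs_of_nonneg (by positivity)]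
    ring

def countGE (s : Finset ℕ) (x : ℤ) : ℕ := #(s.filter fun r : ℕ => x ≤ r)

lemma countGE_sub_le (s : Finset ℕ) {a b : ℤ} (hab : a ≤ b) :
    (countGE s a : ℤ) - countGE s b ≤ b - a := by
  have hsub : s.filter (fun r : ℕ => b ≤ r) ⊆ s.filter (fun r : ℕ => a ≤ r) :=
    fun r => by simp only [mem_filter]; exact fun h => ⟨h.1, hab.trans h.2⟩
  have hdiff : #(s.filter (fun r : ℕ => a ≤ r) \ s.filter (fun r : ℕ => b ≤ r)) ≤ #(Ico a b) :=
    card_le_card_of_injOn (fun r : ℕ => (r : ℤ))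
      (fun r hr => by simp at hr ⊢; exact ⟨hr.1.2, hr.2 hr.1.1⟩) fun _ _ _ _ h => by simpa using h
  rw [card_sdiff_of_subset hsub, Int.card_Ico] at hdiff
  have := card_le_card hsub
  unfold countGE
  omega

lemma abs_countGE_sub_le (s : Finset ℕ) (a b : ℤ) :
    |(countGE s a : ℤ) - countGE s b| ≤ |a - b| := by
  have hmono : ∀ {a b : ℤ}, a ≤ b → countGE s b ≤ countGE s a := fun hab =>
    card_le_card fun r => by simp only [mem_filter]; exact fun h => ⟨h.1, hab.trans h.2⟩
  rcases le_total a b with hab | hab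
  · have := countGE_sub_le s hab; have := hmono hab
    rw [abs_le, abs_of_nonpos (by omega)]; constructor <;> omega
  · have := countGE_sub_le s hab; have := hmono hab
    rw [abs_le, abs_of_nonneg (by omega)]; constructor <;> omega

lemma sum_sum_filter_le_eq_sum_countGE_smul {M : Type*} [AddCommMonoid M] (s : Finset ℕ)
    (U : Finset ℤ) (h : ℤ → ℤ) (a : ℤ → M) :
    ∑ r ∈ s, ∑ n ∈ U with h n ≤ (r : ℤ), a n = ∑ n ∈ U, countGE s (h n) • a n := by
  simp_rw [sum_filter, countGE, card_eq_sum_ones, sum_filter, sum_smul, ite_smul, one_smul,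
    zero_smul]
  exact sum_comm

lemma sum_filter_shift_mul_le_sqrt_mul_sqrt {α : Type*} [AddGroup α] [DecidableEq α]
    (S : Finset α) (k : α) (F G : α → ℝ) :
    ∑ n ∈ S with n + k ∈ S, F (n + k) * G n ≤
      √(∑ n ∈ S, F n ^ 2) * √(∑ n ∈ S, G n ^ 2) := by
  refine (Real.sum_mul_le_sqrt_mul_sqrt _ _ _).trans ?_
  have hF : ∑ n ∈ S with n + k ∈ S, F (n + k) ^ 2 ≤ ∑ n ∈ S, F n ^ 2 := by
    rw [← sum_image (f := fun m => F m ^ 2) (fun _ _ _ _ h => add_right_cancel h)]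
    refine sum_le_sum_of_subset_of_nonneg ?_ fun _ _ _ => sq_nonneg _
    intro m hm
    obtain ⟨n, hn, rfl⟩ := mem_image.1 hm
    exact (mem_filter.1 hn).2
  have hG : ∑ n ∈ S with n + k ∈ S, G n ^ 2 ≤ ∑ n ∈ S, G n ^ 2 :=
    sum_le_sum_of_subset_of_nonneg (filter_subset _ _) fun _ _ _ => sq_nonneg _
  gcongr

noncomputable def finiteRangeOp (K : ℕ) (w : ℤ → ℂ) (v : ℤ → ℝ) (u : ℤ → ℂ) (n : ℤ) : ℂ :=
  (∑ k ∈ Icc (-(K : ℤ)) K, w k * u (n + k)) + (v n : ℂ) * u n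

lemma finiteRangeOp_mul_conj_sub (K : ℕ) {w : ℤ → ℂ} (hw : ∀ k, conj (w (-k)) = w k)
    (v : ℤ → ℝ) (f g : ℤ → ℂ) (n : ℤ) :
    finiteRangeOp K w v f n * conj (g n) - f n * conj (finiteRangeOp K w v g n) =
      ∑ k ∈ Icc (-(K : ℤ)) K, w k * (f (n + k) * conj (g n) - f n * conj (g (n - k))) := by
  have hneg : ∑ k ∈ Icc (-(K : ℤ)) K, f n * conj (w k * g (n + k)) =
      ∑ k ∈ Icc (-(K : ℤ)) K, w k * (f n * conj (g (n - k))) := by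
    conv_rhs => rw [← sum_Icc_neg_symm]
    refine sum_congr rfl fun k _ => ?_
    rw [sub_neg_eq_add, map_mul, ← hw (-k), neg_neg]
    ring
  calc _ = ∑ k ∈ Icc (-(K : ℤ)) K, w k * f (n + k) * conj (g n)
        - ∑ k ∈ Icc (-(K : ℤ)) K, f n * conj (w k * g (n + k)) := by
        simp only [finiteRangeOp, map_add, map_mul, Complex.conj_ofReal, map_sum]
        rw [add_mul, mul_add, sum_mul, mul_sum]
        ring
    _ = _ := by
        rw [hneg, ← sum_sub_distrib]
        exact sum_congr rfl fun k _ => by ring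

lemma sum_wronskian_eq (K : ℕ) {w : ℤ → ℂ} (hw : ∀ k, conj (w (-k)) = w k)
    (v : ℤ → ℝ) (f g : ℤ → ℂ) (T : Finset ℤ) :
    ∑ n ∈ T, (finiteRangeOp K w v f n * conj (g n) - f n * conj (finiteRangeOp K w v g n)) =
      ∑ k ∈ Icc (-(K : ℤ)) K,
        w k * ∑ n ∈ T, (f (n + k) * conj (g n) - f n * conj (g (n - k))) := by
  simp only [finiteRangeOp_mul_conj_sub K hw, mul_sum]
  exact sum_comm

lemma sum_Icc_sub_shift_eq {M : Type*} [AddCommGroup M] (φ : ℤ → M) (r : ℕ) (k : ℤ)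
    (U : Finset ℤ) (hU : ∀ n : ℤ, |n| ≤ r ∨ |n + k| ≤ r → n ∈ U) :
    ∑ n ∈ Icc (-(r : ℤ)) r, (φ n - φ (n - k)) =
      ∑ n ∈ U with |n| ≤ (r : ℤ), φ n - ∑ n ∈ U with |n + k| ≤ (r : ℤ), φ n := by
  rw [sum_sub_distrib]
  congr 1
  · exact sum_congr (by ext n; have := hU n; simp [abs_le] at this ⊢; tauto) fun _ _ => rfl
  · exact sum_nbij' (· - k) (· + k)
      (fun n hn => by have := hU (n - k); simp [abs_le] at *; tauto)
      (fun n hn => by have := hU n; simp [abs_le] at *; tauto) (by simp) (by simp) (by simp)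

lemma sum_sum_Icc_sub_shift_eq {M : Type*} [AddCommGroup M] (φ : ℤ → M) (s : Finset ℕ)
    (k : ℤ) (U : Finset ℤ) (hU : ∀ r ∈ s, ∀ n : ℤ, |n| ≤ r ∨ |n + k| ≤ r → n ∈ U) :
    ∑ r ∈ s, ∑ n ∈ Icc (-(r : ℤ)) r, (φ n - φ (n - k)) =
      ∑ n ∈ U, ((countGE s |n| : ℤ) - countGE s |n + k|) • φ n := by
  rw [sum_congr rfl fun r hr => sum_Icc_sub_shift_eq φ r k U (hU r hr), sum_sub_distrib,
    sum_sum_filter_le_eq_sum_countGE_smul, sum_sum_filter_le_eq_sum_countGE_smul,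
    ← sum_sub_distrib]
  simp only [sub_smul, natCast_zsmul]

lemma norm_sum_countGE_sub_smul_le {E : Type*} [SeminormedAddCommGroup E] (s : Finset ℕ)
    (U : Finset ℤ) (k : ℤ) (φ : ℤ → E) :
    ‖∑ n ∈ U, ((countGE s |n| : ℤ) - countGE s |n + k|) • φ n‖ ≤
      |(k : ℝ)| * ∑ n ∈ U, ‖φ n‖ := by
  rw [mul_sum]
  refine (norm_sum_le _ _).trans (sum_le_sum fun n _ => (norm_zsmul_le _ _).trans ?_)
  gcongr
  have hcount := (abs_countGE_sub_le s |n| |n + k|).trans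
    (by simpa using abs_abs_sub_abs_le_abs_sub n (n + k))
  rw [Int.norm_eq_abs, ← Int.cast_abs]
  exact_mod_cast hcount

lemma norm_sum_sum_Icc_shift_sub_le (f g : ℤ → ℂ) (R K : ℕ) {k : ℤ} (hk : |k| ≤ K) :
    ‖∑ r ∈ Icc 1 R, ∑ n ∈ Icc (-(r : ℤ)) r,
        (f (n + k) * conj (g n) - f n * conj (g (n - k)))‖ ≤
      |(k : ℝ)| * (√(∑ n ∈ Icc (-((R : ℤ) + K)) (R + K), ‖f n‖ ^ 2) *
        √(∑ n ∈ Icc (-((R : ℤ) + K)) (R + K), ‖g n‖ ^ 2)) := by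
  set S := Icc (-((R : ℤ) + K)) (R + K)
  have hU : ∀ r ∈ Icc 1 R, ∀ n : ℤ, |n| ≤ r ∨ |n + k| ≤ r → n ∈ S.filter (· + k ∈ S) := by
    intro r hr n hn
    simp only [S, mem_filter, mem_Icc, abs_le] at *
    omega
  have hsum := sum_sum_Icc_sub_shift_eq (fun n => f (n + k) * conj (g n)) (Icc 1 R) k _ hU
  simp only [sub_add_cancel] at hsum
  rw [hsum]
  refine (norm_sum_countGE_sub_smul_le _ _ _ _).trans ?_
  gcongr
  simpa using sum_filter_shift_mul_le_sqrt_mul_sqrt S k (‖f ·‖) (‖g ·‖)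

theorem stmt10_general (K : ℕ) (w : ℤ → ℂ) (hw : ∀ k : ℤ, (starRingEnd ℂ) (w (-k)) = w k)
    (v : ℤ → ℝ) (f g : ℤ → ℂ)
    (H : (ℤ → ℂ) → (ℤ → ℂ))
    (hH : ∀ (u : ℤ → ℂ) (n : ℤ),
      H u n = (∑ k ∈ Finset.Icc (-(K : ℤ)) K, w k * u (n + k)) + (v n : ℂ) * u n)
    (W : ℕ → ℂ)
    (hW : ∀ r : ℕ, W r = ∑ n ∈ Finset.Icc (-(r : ℤ)) r,
      (H f n * (starRingEnd ℂ) (g n) - f n * (starRingEnd ℂ) (H g n)))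
    (R : ℕ) :
    ‖∑ r ∈ Finset.Icc 1 R, W r‖ ≤
      (∑ j ∈ Finset.Icc 1 K, 4 * (j : ℝ) * ‖w (j : ℤ)‖) *
        Real.sqrt (∑ n ∈ Finset.Icc (-((R : ℤ) + K)) ((R : ℤ) + K), ‖f n‖ ^ 2) *
        Real.sqrt (∑ n ∈ Finset.Icc (-((R : ℤ) + K)) ((R : ℤ) + K), ‖g n‖ ^ 2) := by
  obtain rfl : H = finiteRangeOp K w v := funext fun u => funext (hH u)
  have hwnorm (k : ℤ) : ‖w (-k)‖ = ‖w k‖ := by rw [← hw k, Complex.norm_conj]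
  set Nf := √(∑ n ∈ Icc (-((R : ℤ) + K)) (R + K), ‖f n‖ ^ 2)
  set Ng := √(∑ n ∈ Icc (-((R : ℤ) + K)) (R + K), ‖g n‖ ^ 2)
  calc ‖∑ r ∈ Icc 1 R, W r‖
      = ‖∑ k ∈ Icc (-(K : ℤ)) K, w k * ∑ r ∈ Icc 1 R, ∑ n ∈ Icc (-(r : ℤ)) r,
          (f (n + k) * conj (g n) - f n * conj (g (n - k)))‖ := by
        simp only [hW, sum_wronskian_eq K hw, mul_sum]
        rw [sum_comm]
    _ ≤ ∑ k ∈ Icc (-(K : ℤ)) K, ‖w k‖ * (|(k : ℝ)| * (Nf * Ng)) := by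
        refine (norm_sum_le _ _).trans (sum_le_sum fun k hk => ?_)
        rw [norm_mul]
        gcongr
        exact norm_sum_sum_Icc_shift_sub_le f g R K (abs_le.2 (mem_Icc.1 hk))
    _ = (∑ k ∈ Icc (-(K : ℤ)) K, |(k : ℝ)| * ‖w k‖) * Nf * Ng := by
        rw [sum_mul, sum_mul]
        exact sum_congr rfl fun k _ => by ring
    _ = (2 * ∑ j ∈ Icc 1 K, (j : ℝ) * ‖w j‖) * Nf * Ng := by
        rw [sum_Icc_abs_mul_of_even K _ hwnorm]
    _ ≤ (∑ j ∈ Icc 1 K, 4 * (j : ℝ) * ‖w j‖) * Nf * Ng := by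
        gcongr ?_ * _ * _
        rw [mul_sum]
        exact sum_le_sum fun j _ => by
          nlinarith [norm_nonneg (w j), (Nat.cast_nonneg j : (0 : ℝ) ≤ j)]

/-- Finite-range Lagrange bilinear form estimate:
`|Σ_{r=1}^{R} W_{[-r,r]}(f,g)| ≤ (Σ_{j=1}^{K} 4j|w_j|) ‖f‖_{ℓ²(R+K)} ‖g‖_{ℓ²(R+K)}`. -/
theorem stmt10 (K : ℕ) (w : ℤ → ℂ) (hw : ∀ k : ℤ, (starRingEnd ℂ) (w (-k)) = w k)
    (hsupp : ∀ k : ℤ, (K : ℤ) < |k| → w k = 0)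
    (v : ℤ → ℝ) (f g : ℤ → ℂ)
    (H : (ℤ → ℂ) → (ℤ → ℂ))
    (hH : ∀ (u : ℤ → ℂ) (n : ℤ),
      H u n = (∑ k ∈ Finset.Icc (-(K : ℤ)) K, w k * u (n + k)) + (v n : ℂ) * u n)
    (W : ℕ → ℂ)
    (hW : ∀ r : ℕ, W r = ∑ n ∈ Finset.Icc (-(r : ℤ)) r,
      (H f n * (starRingEnd ℂ) (g n) - f n * (starRingEnd ℂ) (H g n)))
    (R : ℕ) :
    ‖∑ r ∈ Finset.Icc 1 R, W r‖ ≤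
      (∑ j ∈ Finset.Icc 1 K, 4 * (j : ℝ) * ‖w (j : ℤ)‖) *
        Real.sqrt (∑ n ∈ Finset.Icc (-((R : ℤ) + K)) ((R : ℤ) + K), ‖f n‖ ^ 2) *
        Real.sqrt (∑ n ∈ Finset.Icc (-((R : ℤ) + K)) ((R : ℤ) + K), ‖g n‖ ^ 2) :=
  stmt10_general K w hw v f g H hH W hW R
end

section
/- Non-stationary telescoping estimate: let (V_n)_{n≥1} be a sequence of finite-dimensional normed spaces and f_t(n): V_n → V_{n+1}, t ∈ [0,1], invertible linear maps such that ‖f_t(n) - f_s(n)‖ ≤ L|t-s| and ‖f_t(n)⁻¹ - f_s(n)⁻¹‖ ≤ L|t-s| for all n, t, s. Suppose there exists c ≥ 1 such that ‖f_0(n)⋯f_0(j)‖ ≤ c·C(n) for all 1 ≤ j ≤ n, where C(n) := max(max_{1≤s≤n} ‖f_0(s)⋯f_0(1)‖², 1) and C(0) := 1. Then for all t ∈ [0,1] and n ≥ 1, ‖f_t(n)⋯f_t(1)‖ ≤ c·C(n)·exp(c·C(n)·L·t·n). -/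
/-!
The difference of the products of two chains telescopes into the terms
`f(j+m-1) ⋯ f(j+i+1) (f'(j+i) - f(j+i)) f'(j+i-1) ⋯ f'(j)`, which gives a Duhamel inequality for
`‖f'(j+m-1) ⋯ f'(j)‖`. If the segments `f(j+i+r-1) ⋯ f(j+i)` are bounded by `K` and the chains
differ by at most `δ`, this is a discrete Gronwall inequality, solved by `K exp(K δ m)` because
`1 + ∑_{i<m} x e^{x i} ≤ e^{x m}`. The theorem is the case `f = f₀`, `f' = f_t`, `δ = L t`,
`K = c C(n)`, the last because `C` is nondecreasing.
-/

/-- The composition `f(j+n-1) ∘ ⋯ ∘ f(j) : V j →L V (j+n)` of a chain of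
continuous linear maps `f n : V n →L V (n+1)`. -/
noncomputable def prodBetween {V : ℕ → Type*}
    [∀ n, NormedAddCommGroup (V n)] [∀ n, NormedSpace ℂ (V n)]
    (f : (n : ℕ) → V n →L[ℂ] V (n + 1)) (j : ℕ) :
    (n : ℕ) → (V j →L[ℂ] V (j + n))
  | 0 => ContinuousLinearMap.id ℂ (V j)
  | n + 1 => (f (j + n)).comp (prodBetween f j n)

open Finset

lemma one_add_sum_mul_exp_le_exp (x : ℝ) (m : ℕ) :
    1 + ∑ i ∈ range m, x * Real.exp (x * i) ≤ Real.exp (x * m) := by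
  have hterm : ∀ i ∈ range m,
      x * Real.exp (x * i) ≤ Real.exp (x * (i + 1 : ℕ)) - Real.exp (x * i) := by
    intro i _
    have hexp : Real.exp (x * (i + 1 : ℕ)) = Real.exp (x * i) * Real.exp x := by
      rw [← Real.exp_add]; push_cast; ring_nf
    nlinarith [Real.add_one_le_exp x, Real.exp_pos (x * i)]
  have htel := (sum_le_sum hterm).trans_eq (sum_range_sub (fun i => Real.exp (x * i)) m)
  simp only [Nat.cast_zero, mul_zero, Real.exp_zero] at htel
  linarith

lemma le_mul_exp_of_le_add_sum {u : ℕ → ℝ} {K a : ℝ} {n : ℕ} (hK : 0 ≤ K) (ha : 0 ≤ a)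
    (hu : ∀ m ≤ n, u m ≤ K + ∑ i ∈ range m, a * u i) :
    ∀ m ≤ n, u m ≤ K * Real.exp (a * m) := by
  intro m
  induction m using Nat.strong_induction_on with
  | _ m ih =>
  intro hm
  calc u m ≤ K + ∑ i ∈ range m, a * u i := hu m hm
    _ ≤ K + ∑ i ∈ range m, a * (K * Real.exp (a * i)) := by
        gcongr with i hi
        exact ih i (mem_range.1 hi) (by grind)
    _ = K * (1 + ∑ i ∈ range m, a * Real.exp (a * i)) := by
        rw [mul_add, mul_one, mul_sum]; congr 1; exact sum_congr rfl fun _ _ => by ring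
    _ ≤ K * Real.exp (a * m) := by gcongr; exact one_add_sum_mul_exp_le_exp a m

lemma monotone_max_iSup_Icc_one (a : ℕ → ℝ) :
    Monotone fun n => max (⨆ s : Icc 1 n, a s) 1 := by
  intro m n hmn
  refine max_le (Real.iSup_le (fun s => ?_) (zero_le_one.trans (le_max_right _ _)))
    (le_max_right _ _)
  have hs : (s : ℕ) ∈ Icc 1 n := by have := s.2; simp only [mem_Icc] at this ⊢; omega
  exact (le_ciSup (f := fun s : Icc 1 n => a s) (Set.finite_range _).bddAbove ⟨s, hs⟩).trans
    (le_max_left _ _)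

section Chains

variable {V : ℕ → Type*} [∀ n, NormedAddCommGroup (V n)] [∀ n, NormedSpace ℂ (V n)]

/-- `j + 1 + r` and `j + (r + 1)` are not definitionally equal, so peeling off the first factor
is only an `HEq`. -/
lemma heq_prodBetween_succ (f : (n : ℕ) → V n →L[ℂ] V (n + 1)) (j : ℕ) :
    ∀ r, HEq ((prodBetween f (j + 1) r).comp (f j)) (prodBetween f j (r + 1))
  | 0 => heq_of_eq (by ext; rfl)
  | r + 1 => by
    have hcomp : ∀ {a b : ℕ}, a = b → ∀ {A : V j →L[ℂ] V a} {B : V j →L[ℂ] V b},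
        HEq A B → HEq ((f a).comp A) ((f b).comp B) := by
      rintro a b rfl A B hAB
      rw [eq_of_heq hAB]
    exact hcomp (by omega) (heq_prodBetween_succ f j r)

lemma norm_prodBetween_succ_comp {E : Type*} [NormedAddCommGroup E] [NormedSpace ℂ E]
    (f : (n : ℕ) → V n →L[ℂ] V (n + 1)) (j r : ℕ) (X : E →L[ℂ] V j) :
    ‖(prodBetween f j (r + 1)).comp X‖ = ‖(prodBetween f (j + 1) r).comp ((f j).comp X)‖ := by
  have hnorm : ∀ {a b : ℕ}, a = b → ∀ {A : V j →L[ℂ] V a} {B : V j →L[ℂ] V b},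
      HEq A B → ‖A.comp X‖ = ‖B.comp X‖ := by
    rintro a b rfl A B hAB
    rw [eq_of_heq hAB]
  rw [← ContinuousLinearMap.comp_assoc]
  exact (hnorm (by omega) (heq_prodBetween_succ f j r)).symm

/-- One step of the telescoping: replace the factor `f (j+k)` of the hybrid product
`f(j+k+r) ⋯ f(j+k) f'(j+k-1) ⋯ f'(j)` by `f' (j+k)`. -/
lemma norm_hybrid_succ_le (f f' : (n : ℕ) → V n →L[ℂ] V (n + 1)) (j k r : ℕ) :
    ‖(prodBetween f (j + k + 1) r).comp (prodBetween f' j (k + 1))‖ ≤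
      ‖(prodBetween f (j + k) (r + 1)).comp (prodBetween f' j k)‖ +
        ‖prodBetween f (j + k + 1) r‖ * ‖f' (j + k) - f (j + k)‖ * ‖prodBetween f' j k‖ := by
  have hsplit : prodBetween f' j (k + 1) =
      (f (j + k)).comp (prodBetween f' j k) +
        (f' (j + k) - f (j + k)).comp (prodBetween f' j k) := by
    rw [← ContinuousLinearMap.add_comp, add_sub_cancel]; rfl
  rw [hsplit, ContinuousLinearMap.comp_add, norm_prodBetween_succ_comp]
  refine (norm_add_le _ _).trans (add_le_add_right ?_ _)
  calc _ ≤ ‖prodBetween f (j + k + 1) r‖ * ‖(f' (j + k) - f (j + k)).comp (prodBetween f' j k)‖ :=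
        ContinuousLinearMap.opNorm_comp_le _ _
    _ ≤ _ := by
        rw [mul_assoc]; gcongr; exact ContinuousLinearMap.opNorm_comp_le _ _

lemma norm_prodBetween_le_duhamel (f f' : (n : ℕ) → V n →L[ℂ] V (n + 1)) (j m : ℕ) :
    ‖prodBetween f' j m‖ ≤ ‖prodBetween f j m‖ + ∑ i ∈ range m,
      ‖prodBetween f (j + i + 1) (m - (i + 1))‖ * ‖f' (j + i) - f (j + i)‖ *
        ‖prodBetween f' j i‖ := by
  have hybrid : ∀ k ≤ m, ‖(prodBetween f (j + k) (m - k)).comp (prodBetween f' j k)‖ ≤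
      ‖prodBetween f j m‖ + ∑ i ∈ range k,
        ‖prodBetween f (j + i + 1) (m - (i + 1))‖ * ‖f' (j + i) - f (j + i)‖ *
          ‖prodBetween f' j i‖ := by
    intro k
    induction k with
    | zero =>
      intro _
      rw [Nat.sub_zero, range_zero, sum_empty]
      exact (congrArg norm (ContinuousLinearMap.comp_id _)).trans_le (le_add_of_nonneg_right le_rfl)
    | succ k ih =>
      intro hk
      have hstep := norm_hybrid_succ_le f f' j k (m - (k + 1))
      rw [show m - (k + 1) + 1 = m - k by omega] at hstep
      rw [sum_range_succ]
      exact hstep.trans (by linarith [ih (by omega)])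
  have hm := hybrid m le_rfl
  rwa [Nat.sub_self, show prodBetween f (j + m) 0 = ContinuousLinearMap.id ℂ _ from rfl,
    ContinuousLinearMap.id_comp] at hm

theorem norm_prodBetween_le_mul_exp (f f' : (n : ℕ) → V n →L[ℂ] V (n + 1)) {K δ : ℝ} {j n : ℕ}
    (hf : ∀ i r, i + r ≤ n → ‖prodBetween f (j + i) r‖ ≤ K)
    (hff' : ∀ k, ‖f' k - f k‖ ≤ δ) :
    ∀ m ≤ n, ‖prodBetween f' j m‖ ≤ K * Real.exp (K * δ * m) := by
  have hK : 0 ≤ K := (norm_nonneg _).trans (hf 0 0 (Nat.zero_le n))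
  have hδ : 0 ≤ δ := (norm_nonneg _).trans (hff' 0)
  refine le_mul_exp_of_le_add_sum hK (mul_nonneg hK hδ) fun m hm => ?_
  refine (norm_prodBetween_le_duhamel f f' j m).trans (add_le_add (hf 0 m (by omega)) ?_)
  gcongr with i hi
  · exact hf (i + 1) (m - (i + 1)) (by have := mem_range.1 hi; omega)
  · exact hff' _

end Chains

theorem stmt11_general {V : ℕ → Type*}
    [∀ n, NormedAddCommGroup (V n)] [∀ n, NormedSpace ℂ (V n)]
    (f : ℝ → (n : ℕ) → V n →L[ℂ] V (n + 1))
    (L : ℝ)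
    (hLip : ∀ n, ∀ t ∈ Set.Icc (0 : ℝ) 1, ∀ s ∈ Set.Icc (0 : ℝ) 1,
      ‖f t n - f s n‖ ≤ L * |t - s|)
    (Cn : ℕ → ℝ)
    (hCn : ∀ n, Cn n =
      max (⨆ s : Finset.Icc 1 n, ‖prodBetween (f 0) 0 (s : ℕ)‖ ^ 2) 1)
    (c : ℝ)
    (hseg : ∀ j n : ℕ, j ≤ n → ‖prodBetween (f 0) j (n - j)‖ ≤ c * Cn n) :
    ∀ t ∈ Set.Icc (0 : ℝ) 1, ∀ n : ℕ, 1 ≤ n →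
      ‖prodBetween (f t) 0 n‖ ≤ c * Cn n * Real.exp (c * Cn n * L * t * n) := by
  intro t ht n _
  have hCmono : Monotone Cn := by
    rw [funext hCn]; exact monotone_max_iSup_Icc_one fun k => ‖prodBetween (f 0) 0 k‖ ^ 2
  have hc : 0 ≤ c := nonneg_of_mul_nonneg_left ((norm_nonneg _).trans (hseg 0 0 le_rfl))
    (by rw [hCn 0]; exact zero_lt_one.trans_le (le_max_right _ _))
  have hsegn : ∀ i r, i + r ≤ n → ‖prodBetween (f 0) (0 + i) r‖ ≤ c * Cn n := by
    intro i r hir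
    have h := hseg (0 + i) (0 + i + r) (by omega)
    rw [Nat.add_sub_cancel_left] at h
    exact h.trans (mul_le_mul_of_nonneg_left (hCmono (by omega)) hc)
  have hpert : ∀ k, ‖f t k - f 0 k‖ ≤ L * t := by
    intro k
    have h := hLip k t ht 0 ⟨le_rfl, zero_le_one⟩
    rwa [sub_zero, abs_of_nonneg ht.1] at h
  simpa only [mul_assoc] using norm_prodBetween_le_mul_exp (f 0) (f t) hsegn hpert n le_rfl

/-- Non-stationary telescoping estimate for a one-parameter family of chains of
invertible linear maps with uniformly Lipschitz parameter dependence. -/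
theorem stmt11 {V : ℕ → Type*}
    [∀ n, NormedAddCommGroup (V n)] [∀ n, NormedSpace ℂ (V n)]
    [∀ n, FiniteDimensional ℂ (V n)]
    (f : ℝ → (n : ℕ) → V n →L[ℂ] V (n + 1))
    (g : ℝ → (n : ℕ) → V (n + 1) →L[ℂ] V n)
    (hinv₁ : ∀ t ∈ Set.Icc (0 : ℝ) 1, ∀ n,
      (g t n).comp (f t n) = ContinuousLinearMap.id ℂ (V n))
    (hinv₂ : ∀ t ∈ Set.Icc (0 : ℝ) 1, ∀ n,
      (f t n).comp (g t n) = ContinuousLinearMap.id ℂ (V (n + 1)))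
    (L : ℝ)
    (hLip : ∀ n, ∀ t ∈ Set.Icc (0 : ℝ) 1, ∀ s ∈ Set.Icc (0 : ℝ) 1,
      ‖f t n - f s n‖ ≤ L * |t - s|)
    (hLipInv : ∀ n, ∀ t ∈ Set.Icc (0 : ℝ) 1, ∀ s ∈ Set.Icc (0 : ℝ) 1,
      ‖g t n - g s n‖ ≤ L * |t - s|)
    (Cn : ℕ → ℝ)
    (hCn : ∀ n, Cn n =
      max (⨆ s : Finset.Icc 1 n, ‖prodBetween (f 0) 0 (s : ℕ)‖ ^ 2) 1)
    (c : ℝ) (hc : 1 ≤ c)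
    (hseg : ∀ j n : ℕ, j ≤ n → ‖prodBetween (f 0) j (n - j)‖ ≤ c * Cn n) :
    ∀ t ∈ Set.Icc (0 : ℝ) 1, ∀ n : ℕ, 1 ≤ n →
      ‖prodBetween (f t) 0 n‖ ≤ c * Cn n * Real.exp (c * Cn n * L * t * n) :=
  stmt11_general f L hLip Cn hCn c hseg
end

section
/- Continuous Sylvester inertia decomposition: let G : X → GL(m, ℂ) ∩ Her(m, ℂ) be a continuous family of invertible Hermitian matrices on a topological space X, and suppose at every point exactly p eigenvalues are positive and m - p are negative. Then locally near every point x₀ there exists a continuous N : U → GL(m, ℂ) such that N(x)* G(x) N(x) = diag(I_p, -I_{m-p}) for all x ∈ U. -/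
/-!
Diagonalise `G x₀` by a unitary matrix whose columns are ordered so that the `p` positive
eigenvalues come first: this gives `N₀` with `N₀ᴴ * G x₀ * N₀` real diagonal with the required
signs. For `H x = N₀ᴴ * G x * N₀`, run Gram–Schmidt on the standard basis with respect to the
indefinite form `⟨u, H x v⟩`. At `x₀` the pivots `⟨v k, H x₀ (v k)⟩` are the eigenvalues, hence
nonzero, and each pivot depends continuously on `H` as long as the earlier ones do not vanish; so
near `x₀` all pivots keep their signs. Rescaling `v k` by `|pivot k|^(-1/2)` then gives the
congruence to `diag(I_p, -I_{m-p})`.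
-/

open Matrix Topology

theorem Real.inv_sqrt_abs_mul_mul_inv_sqrt_abs {r : ℝ} (hr : r ≠ 0) :
    (√|r|)⁻¹ * r * (√|r|)⁻¹ = SignType.sign r := by
  have hs : √|r| ≠ 0 := Real.sqrt_ne_zero'.2 (abs_pos.2 hr)
  field_simp
  rw [Real.sq_sqrt (abs_nonneg r), mul_comm, sign_mul_abs]

theorem Equiv.Perm.exists_forall_iff_mem_of_card_eq {α : Type*} [Fintype α] [DecidableEq α]
    (p : α → Prop) [DecidablePred p] (s : Finset α) (h : Finset.card {a | p a} = s.card) :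
    ∃ σ : Equiv.Perm α, ∀ a, p a ↔ σ a ∈ s := by
  have e₁ : {a // p a} ≃ {a // a ∈ s} :=
    Fintype.equivOfCardEq (by rw [Fintype.card_subtype, h, Fintype.card_coe])
  have e₂ : {a // ¬p a} ≃ {a // a ∉ s} :=
    Fintype.equivOfCardEq (by
      rw [Fintype.card_subtype_compl, Fintype.card_subtype_compl, Fintype.card_subtype, h,
        Fintype.card_coe])
  refine ⟨e₁.subtypeCongr e₂, fun a => ?_⟩
  by_cases ha : p a
  · simp [Equiv.subtypeCongr, ha]
  · simpa [Equiv.subtypeCongr, ha] using (e₂ ⟨a, ha⟩).2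

namespace Matrix.HermitianGramSchmidt

variable {𝕜 : Type*} [RCLike 𝕜] {n : Type*} [Fintype n]

def form (H : Matrix n n 𝕜) (u v : n → 𝕜) : 𝕜 := star u ⬝ᵥ H *ᵥ v

theorem form_sub_right (H : Matrix n n 𝕜) (u v w : n → 𝕜) :
    form H u (v - w) = form H u v - form H u w := by
  simp [form, mulVec_sub, dotProduct_sub]

theorem form_smul_right (H : Matrix n n 𝕜) (c : 𝕜) (u v : n → 𝕜) :
    form H u (c • v) = c * form H u v := by
  simp [form, mulVec_smul, dotProduct_smul]

theorem form_sum_right {ι : Type*} (H : Matrix n n 𝕜) (u : n → 𝕜) (s : Finset ι)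
    (v : ι → n → 𝕜) : form H u (∑ i ∈ s, v i) = ∑ i ∈ s, form H u (v i) := by
  simp [form, mulVec_sum, dotProduct_sum]

theorem star_form {H : Matrix n n 𝕜} (hH : H.IsHermitian) (u v : n → 𝕜) :
    star (form H u v) = form H v u :=
  calc star (form H u v) = star (H *ᵥ v) ⬝ᵥ u := (star_dotProduct _ _).symm
    _ = form H v u := by rw [star_mulVec, hH.eq, ← dotProduct_mulVec, form]

theorem form_diagonal_single [DecidableEq n] (d : n → 𝕜) (j k : n) :
    form (diagonal d) (Pi.single j 1) (Pi.single k 1) = if j = k then d k else 0 := by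
  rcases eq_or_ne j k with rfl | h <;> simp [form, mulVec_single, *]

theorem conjTranspose_mul_mul_apply (A H : Matrix n n 𝕜) (j k : n) :
    (Aᴴ * H * A) j k = form H (Aᵀ j) (Aᵀ k) :=
  mul_mul_apply _ _ _ _ _

theorem continuousAt_form {X : Type*} [TopologicalSpace X] {H : X → Matrix n n 𝕜}
    {u v : X → n → 𝕜} {x : X} (hH : ContinuousAt H x) (hu : ContinuousAt u x)
    (hv : ContinuousAt v x) : ContinuousAt (fun x => form (H x) (u x) (v x)) x := by
  unfold form
  fun_prop

variable [LinearOrder n]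

/-- Gram–Schmidt of the standard basis for the possibly indefinite form `form H`. A vanishing
pivot makes the division return `0`, so the lemmas below assume the earlier pivots nonzero. -/
noncomputable def vec (H : Matrix n n 𝕜) : n → n → 𝕜 :=
  WellFoundedLT.fix fun k vec => Pi.single k 1 - ∑ j : {j // j < k},
    (form H (vec j j.2) (Pi.single k 1) / form H (vec j j.2) (vec j j.2)) • vec j j.2

noncomputable def pivot (H : Matrix n n 𝕜) (k : n) : 𝕜 := form H (vec H k) (vec H k)

noncomputable def mat (H : Matrix n n 𝕜) : Matrix n n 𝕜 := of fun i k => vec H k i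

theorem vec_eq (H : Matrix n n 𝕜) (k : n) :
    vec H k = Pi.single k 1 - ∑ j with j < k,
      (form H (vec H j) (Pi.single k 1) / pivot H j) • vec H j := by
  rw [vec, WellFoundedLT.fix_eq, ← Finset.sum_subtype_eq_sum_filter, Finset.subtype_univ]
  rfl

theorem vec_apply_of_lt (H : Matrix n n 𝕜) {i k : n} (hki : k < i) : vec H k i = 0 := by
  induction k using WellFoundedLT.induction generalizing i with
  | _ k ih =>
    rw [vec_eq, Pi.sub_apply, Pi.single_eq_of_ne hki.ne', Finset.sum_apply, Finset.sum_eq_zero,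
      sub_zero]
    intro j hj
    obtain hjk : j < k := by simpa using hj
    rw [Pi.smul_apply, ih j hjk (hjk.trans hki), smul_zero]

theorem vec_apply_self (H : Matrix n n 𝕜) (k : n) : vec H k k = 1 := by
  rw [vec_eq, Pi.sub_apply, Pi.single_eq_same, Finset.sum_apply, Finset.sum_eq_zero, sub_zero]
  intro j hj
  obtain hjk : j < k := by simpa using hj
  rw [Pi.smul_apply, vec_apply_of_lt H hjk, smul_zero]

theorem det_mat (H : Matrix n n 𝕜) : (mat H).det = 1 := by
  rw [det_of_isUpperTriangular (M := mat H) fun i k hki => vec_apply_of_lt H hki]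
  exact Finset.prod_eq_one fun k _ => vec_apply_self H k

theorem form_vec_vec_of_lt {H : Matrix n n 𝕜} (hH : H.IsHermitian) {k : n}
    (hk : ∀ i < k, pivot H i ≠ 0) {j : n} (hjk : j < k) : form H (vec H j) (vec H k) = 0 := by
  induction k using WellFoundedLT.induction generalizing j with
  | _ k ih =>
    have horth : ∀ i < k, i ≠ j → form H (vec H j) (vec H i) = 0 := by
      intro i hik hij
      rcases hij.lt_or_gt with hij | hji
      · rw [← star_form hH, ih j hjk (fun l hl => hk l (hl.trans hjk)) hij, star_zero]
      · exact ih i hik (fun l hl => hk l (hl.trans hik)) hji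
    rw [vec_eq H k, form_sub_right, form_sum_right, Finset.sum_eq_single_of_mem j
      (by simpa using hjk), form_smul_right]
    · exact sub_eq_zero.2 (div_mul_cancel₀ _ (hk j hjk)).symm
    intro i hi hij
    rw [form_smul_right, horth i (by simpa using hi) hij, mul_zero]

theorem conjTranspose_mat_mul_mul_mat {H : Matrix n n 𝕜} (hH : H.IsHermitian)
    (hpivot : ∀ k, pivot H k ≠ 0) : (mat H)ᴴ * H * mat H = diagonal (pivot H) := by
  ext j k
  rw [conjTranspose_mul_mul_apply]
  rcases lt_trichotomy j k with hjk | rfl | hkj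
  · exact (form_vec_vec_of_lt hH (fun i _ => hpivot i) hjk).trans
      (diagonal_apply_ne (pivot H) hjk.ne).symm
  · exact (diagonal_apply_eq (pivot H) j).symm
  · rw [diagonal_apply_ne _ hkj.ne', ← star_form hH]
    exact (congrArg star (form_vec_vec_of_lt hH (fun i _ => hpivot i) hkj)).trans (star_zero _)

theorem vec_diagonal (d : n → 𝕜) (k : n) : vec (diagonal d) k = Pi.single k 1 := by
  induction k using WellFoundedLT.induction with
  | _ k ih =>
    rw [vec_eq, Finset.sum_eq_zero, sub_zero]
    intro j hj
    obtain hjk : j < k := by simpa using hj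
    rw [ih j hjk, form_diagonal_single, if_neg hjk.ne, zero_div, zero_smul]

theorem pivot_diagonal (d : n → 𝕜) (k : n) : pivot (diagonal d) k = d k := by
  rw [pivot, vec_diagonal, form_diagonal_single, if_pos rfl]

theorem continuousAt_vec {H₀ : Matrix n n 𝕜} {k : n} (hk : ∀ j < k, pivot H₀ j ≠ 0) :
    ContinuousAt (fun H => vec H k) H₀ := by
  induction k using WellFoundedLT.induction with
  | _ k ih =>
    have hvec : ∀ j < k, ContinuousAt (fun H => vec H j) H₀ :=
      fun j hjk => ih j hjk fun i hij => hk i (hij.trans hjk)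
    simp only [vec_eq _ k]
    refine continuousAt_const.sub (tendsto_finsetSum _ fun j hj => ?_)
    obtain hjk : j < k := by simpa using hj
    exact ((continuousAt_form continuousAt_id (hvec j hjk) continuousAt_const).div
      (continuousAt_form continuousAt_id (hvec j hjk) (hvec j hjk)) (hk j hjk)).smul (hvec j hjk)

theorem continuousAt_pivot {H₀ : Matrix n n 𝕜} {k : n} (hk : ∀ j < k, pivot H₀ j ≠ 0) :
    ContinuousAt (fun H => pivot H k) H₀ :=
  continuousAt_form continuousAt_id (continuousAt_vec hk) (continuousAt_vec hk)

theorem ofReal_re_pivot {H : Matrix n n 𝕜} (hH : H.IsHermitian) (k : n) :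
    (RCLike.re (pivot H k) : 𝕜) = pivot H k :=
  RCLike.conj_eq_iff_re.1 (star_form hH _ _)

noncomputable def normalizedMat (H : Matrix n n 𝕜) : Matrix n n 𝕜 :=
  mat H * diagonal fun k => (((√|RCLike.re (pivot H k)|)⁻¹ : ℝ) : 𝕜)

theorem isUnit_normalizedMat {H : Matrix n n 𝕜} (hpivot : ∀ k, RCLike.re (pivot H k) ≠ 0) :
    IsUnit (normalizedMat H) := by
  rw [isUnit_iff_isUnit_det, normalizedMat, det_mul, det_mat, one_mul, det_diagonal]
  exact (Finset.prod_ne_zero_iff.2 fun k _ => by simpa using hpivot k).isUnit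

theorem conjTranspose_normalizedMat_mul_mul {H : Matrix n n 𝕜} (hH : H.IsHermitian)
    (hpivot : ∀ k, RCLike.re (pivot H k) ≠ 0) :
    (normalizedMat H)ᴴ * H * normalizedMat H =
      diagonal fun k => ((SignType.sign (RCLike.re (pivot H k)) : ℝ) : 𝕜) := by
  have hpivot' : ∀ k, pivot H k ≠ 0 := fun k h => hpivot k (by rw [h, map_zero])
  set D : Matrix n n 𝕜 := diagonal fun k => (((√|RCLike.re (pivot H k)|)⁻¹ : ℝ) : 𝕜)
  have hconj : (mat H * D)ᴴ * H * (mat H * D) = Dᴴ * ((mat H)ᴴ * H * mat H) * D := by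
    simp only [conjTranspose_mul, Matrix.mul_assoc]
  rw [normalizedMat, hconj, conjTranspose_mat_mul_mul_mat hH hpivot', diagonal_conjTranspose,
    diagonal_mul_diagonal, diagonal_mul_diagonal]
  congr 1
  funext k
  have hre := ofReal_re_pivot hH k
  have hk := hpivot k
  rw [Pi.star_apply, RCLike.star_def, RCLike.conj_ofReal]
  generalize RCLike.re (pivot H k) = r at hre hk ⊢
  rw [← hre, ← RCLike.ofReal_mul, ← RCLike.ofReal_mul, Real.inv_sqrt_abs_mul_mul_inv_sqrt_abs hk]

theorem continuousAt_normalizedMat {H₀ : Matrix n n 𝕜}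
    (hpivot : ∀ k, RCLike.re (pivot H₀ k) ≠ 0) : ContinuousAt normalizedMat H₀ := by
  have hpivot' : ∀ k, pivot H₀ k ≠ 0 := fun k h => hpivot k (by rw [h, map_zero])
  have hmat : ContinuousAt mat H₀ :=
    continuousAt_pi.2 fun i => continuousAt_pi.2 fun k =>
      (continuous_apply i).continuousAt.comp (continuousAt_vec fun j _ => hpivot' j)
  have hre : ∀ k, ContinuousAt (fun H => RCLike.re (pivot H k)) H₀ := fun k =>
    RCLike.continuous_re.continuousAt.comp (continuousAt_pivot fun j _ => hpivot' j)
  have hscale : ContinuousAt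
      (fun H : Matrix n n 𝕜 => fun k => (((√|RCLike.re (pivot H k)|)⁻¹ : ℝ) : 𝕜)) H₀ :=
    continuousAt_pi.2 fun k => RCLike.continuous_ofReal.continuousAt.comp
      ((hre k).abs.sqrt.inv₀ (Real.sqrt_ne_zero'.2 (abs_pos.2 (hpivot k))))
  exact hmat.mul ((continuous_id.matrix_diagonal).continuousAt.comp hscale)

theorem exists_continuousOn_conjTranspose_mul_mul_eq_diagonal_sign {X : Type*}
    [TopologicalSpace X] {H : X → Matrix n n 𝕜} (hcont : Continuous H)
    (hH : ∀ x, (H x).IsHermitian) {x₀ : X} (hpivot : ∀ k, RCLike.re (pivot (H x₀) k) ≠ 0) :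
    ∃ U ∈ 𝓝 x₀, ∃ L : X → Matrix n n 𝕜, ContinuousOn L U ∧ (∀ x ∈ U, IsUnit (L x)) ∧
      ∀ x ∈ U, (L x)ᴴ * H x * L x =
        diagonal fun k => ((SignType.sign (RCLike.re (pivot (H x₀) k)) : ℝ) : 𝕜) := by
  have hpivot' : ∀ j, pivot (H x₀) j ≠ 0 := fun j h => hpivot j (by rw [h, map_zero])
  have hsign : ∀ k, ∀ᶠ x in 𝓝 x₀,
      SignType.sign (RCLike.re (pivot (H x) k)) = SignType.sign (RCLike.re (pivot (H x₀) k)) := by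
    intro k
    have hp : ContinuousAt (fun x => pivot (H x) k) x₀ :=
      (continuousAt_pivot fun j _ => hpivot' j).comp hcont.continuousAt
    have hre : ContinuousAt (fun x => RCLike.re (pivot (H x) k)) x₀ :=
      RCLike.continuous_re.continuousAt.comp hp
    have := (ContinuousAt.comp (f := fun x => RCLike.re (pivot (H x) k))
      (continuousAt_sign_of_ne_zero (hpivot k)) hre).tendsto
    rwa [nhds_discrete SignType, Filter.tendsto_pure] at this
  set U := {x | ∀ k,
    SignType.sign (RCLike.re (pivot (H x) k)) = SignType.sign (RCLike.re (pivot (H x₀) k))}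
  have hpivotU : ∀ x ∈ U, ∀ k, RCLike.re (pivot (H x) k) ≠ 0 := fun x hx k h =>
    hpivot k (sign_eq_zero_iff.1 ((hx k).symm.trans (by rw [h, sign_zero])))
  refine ⟨U, Filter.eventually_all.2 hsign, fun x => normalizedMat (H x),
    fun x hx => ((continuousAt_normalizedMat (hpivotU x hx)).comp
      hcont.continuousAt).continuousWithinAt,
    fun x hx => isUnit_normalizedMat (hpivotU x hx), fun x hx => ?_⟩
  rw [conjTranspose_normalizedMat_mul_mul (hH x) (hpivotU x hx)]
  simp only [hx _]

end Matrix.HermitianGramSchmidt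

namespace Matrix.IsHermitian

variable {𝕜 : Type*} [RCLike 𝕜] {n : Type*} [Fintype n] [DecidableEq n] {A : Matrix n n 𝕜}

theorem exists_isUnit_conjTranspose_mul_mul_eq_diagonal_comp (hA : A.IsHermitian)
    (σ : Equiv.Perm n) :
    ∃ N : Matrix n n 𝕜, IsUnit N ∧
      Nᴴ * A * N = diagonal fun k => (hA.eigenvalues (σ k) : 𝕜) := by
  set U : Matrix n n 𝕜 := (hA.eigenvectorUnitary : Matrix n n 𝕜)
  have hU : Uᴴ * A * U = diagonal fun k => (hA.eigenvalues k : 𝕜) := by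
    rw [← star_eq_conjTranspose, ← Unitary.conjStarAlgAut_star_apply (S := 𝕜),
      conjStarAlgAut_star_eigenvectorUnitary]
    rfl
  refine ⟨U.submatrix id σ, (isUnit_submatrix_equiv (Equiv.refl n) σ).2 Unitary.isUnit_coe, ?_⟩
  have hperm : (U.submatrix id σ)ᴴ * A * U.submatrix id σ = (Uᴴ * A * U).submatrix σ σ := by
    ext j k
    simp only [HermitianGramSchmidt.conjTranspose_mul_mul_apply, submatrix_apply]
    rfl
  rw [hperm, hU, submatrix_diagonal_equiv]
  rfl

theorem eigenvalues_ne_zero_of_isUnit (hA : A.IsHermitian) (hA₁ : IsUnit A) (i : n) :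
    hA.eigenvalues i ≠ 0 := by
  intro h
  have hdet := (isUnit_iff_isUnit_det A).1 hA₁
  rw [hA.det_eq_prod_eigenvalues, Finset.prod_eq_zero (Finset.mem_univ i) (by simp [h])] at hdet
  exact not_isUnit_zero hdet

theorem exists_isUnit_conjTranspose_mul_mul_eq_diagonal_sign {m : ℕ}
    {A : Matrix (Fin m) (Fin m) 𝕜} (hA : A.IsHermitian) (hA₁ : IsUnit A) :
    ∃ N : Matrix (Fin m) (Fin m) 𝕜, IsUnit N ∧ ∃ d : Fin m → ℝ,
      Nᴴ * A * N = diagonal (fun k => (d k : 𝕜)) ∧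
      ∀ k, SignType.sign (d k) =
        if (k : ℕ) < Finset.card {i | 0 < hA.eigenvalues i} then 1 else -1 := by
  set s : Finset (Fin m) := {i | 0 < hA.eigenvalues i}
  have hcard : Finset.card {k : Fin m | (k : ℕ) < s.card} = s.card := by
    rw [Fin.card_filter_val_lt, min_eq_right (by simpa using s.card_le_univ)]
  obtain ⟨σ, hσ⟩ := Equiv.Perm.exists_forall_iff_mem_of_card_eq _ s hcard
  obtain ⟨N, hN, hdiag⟩ := hA.exists_isUnit_conjTranspose_mul_mul_eq_diagonal_comp σ
  refine ⟨N, hN, _, hdiag, fun k => ?_⟩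
  split_ifs with hk
  · exact sign_pos (by simpa [s] using (hσ k).1 hk)
  · exact sign_neg (lt_of_le_of_ne (by simpa [s] using mt (hσ k).2 hk)
      (hA.eigenvalues_ne_zero_of_isUnit hA₁ (σ k)))

end Matrix.IsHermitian

theorem stmt14_general {X : Type*} [TopologicalSpace X] {m p : ℕ}
    (G : X → Matrix (Fin m) (Fin m) ℂ) (hGcont : Continuous G)
    (hGherm : ∀ x, (G x).IsHermitian) (hGinv : ∀ x, IsUnit (G x))
    (hGpos : ∀ x,
      (Finset.univ.filter fun i => 0 < (hGherm x).eigenvalues i).card = p) :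
    ∀ x₀ : X, ∃ U ∈ nhds x₀, ∃ N : X → Matrix (Fin m) (Fin m) ℂ,
      ContinuousOn N U ∧ (∀ x ∈ U, IsUnit (N x)) ∧
      ∀ x ∈ U, (N x)ᴴ * G x * N x =
        Matrix.diagonal (fun i : Fin m => if (i : ℕ) < p then (1 : ℂ) else -1) := by
  intro x₀
  obtain ⟨N₀, hN₀, d, hd, hsign⟩ :=
    (hGherm x₀).exists_isUnit_conjTranspose_mul_mul_eq_diagonal_sign (hGinv x₀)
  rw [hGpos x₀] at hsign
  have hpivot : ∀ k, RCLike.re (HermitianGramSchmidt.pivot (N₀ᴴ * G x₀ * N₀) k) = d k := by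
    simp [hd, HermitianGramSchmidt.pivot_diagonal]
  obtain ⟨U, hU, L, hLcont, hLunit, hL⟩ :=
    HermitianGramSchmidt.exists_continuousOn_conjTranspose_mul_mul_eq_diagonal_sign
      (H := fun x => N₀ᴴ * G x * N₀) (by fun_prop)
      (fun x => isHermitian_conjTranspose_mul_mul N₀ (hGherm x)) (x₀ := x₀)
      (fun k => by rw [hpivot]; exact sign_ne_zero.1 (by rw [hsign k]; split_ifs <;> decide))
  refine ⟨U, hU, fun x => N₀ * L x, continuousOn_const.mul hLcont,
    fun x hx => hN₀.mul (hLunit x hx), fun x hx => ?_⟩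
  calc (N₀ * L x)ᴴ * G x * (N₀ * L x) = (L x)ᴴ * (N₀ᴴ * G x * N₀) * L x := by
        simp only [conjTranspose_mul, Matrix.mul_assoc]
    _ = _ := by
        rw [hL x hx]
        congr 1
        funext k
        rw [hpivot, hsign]
        split_ifs <;> simp

/-- Continuous Sylvester inertia decomposition: a continuous family of invertible
Hermitian matrices with constant inertia `(p, m-p)` is locally continuously
congruent to `diag(I_p, -I_{m-p})`. -/
theorem stmt14 {X : Type*} [TopologicalSpace X] {m p : ℕ} (hp : p ≤ m)
    (G : X → Matrix (Fin m) (Fin m) ℂ) (hGcont : Continuous G)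
    (hGherm : ∀ x, (G x).IsHermitian) (hGinv : ∀ x, IsUnit (G x))
    (hGpos : ∀ x,
      (Finset.univ.filter fun i => 0 < (hGherm x).eigenvalues i).card = p)
    (hGneg : ∀ x,
      (Finset.univ.filter fun i => (hGherm x).eigenvalues i < 0).card = m - p) :
    ∀ x₀ : X, ∃ U ∈ nhds x₀, ∃ N : X → Matrix (Fin m) (Fin m) ℂ,
      ContinuousOn N U ∧ (∀ x ∈ U, IsUnit (N x)) ∧
      ∀ x ∈ U, (N x)ᴴ * G x * N x =
        Matrix.diagonal (fun i : Fin m => if (i : ℕ) < p then (1 : ℂ) else -1) :=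
  stmt14_general G hGcont hGherm hGinv hGpos
end

section
/- Let μ be a finite compactly supported Borel measure on ℝ with Stieltjes transform F_μ(z) = ∫ dμ(x)/(x - z) for z ∈ ℂ \ ℝ, and let 0 < α ≤ 1. Define the upper α-derivative D_μ^{+,α}(E) = limsup_{ε→0} μ(E-ε, E+ε)/(2ε)^α. Then there exist universal constants C₁, C₂ > 0 (depending only on α) such that for every E ∈ ℝ: C₁ · D_μ^{+,α}(E) ≤ limsup_{ε→0} ε^{1-α} · Im F_μ(E + iε) ≤ C₂ · D_μ^{+,α}(E). -/
/-!
The lower bound is pointwise in `ε`: on `(E - ε, E + ε)` the kernel `ε / ((x - E)² + ε²)` is at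
least `1 / (2ε)`.

For the upper bound, dominate the kernel by the dyadic sum `∑ₙ 4 / (4ⁿ ε) · 1{|x - E| < 2ⁿ ε}`.
If `μ (E - δ, E + δ) ≤ L (2δ)^α` at every scale `δ`, each dyadic term of `ε^{1-α} Im F_μ (E + iε)`
is at most `2^{α+2} 2^{(α-2)n} L ≤ 8 L / 2ⁿ`, so the whole is at most `16 L`. Given `L` above the
upper `α`-derivative, that scale condition holds for `δ ≤ δ₀`, hence at all scales for the
restriction of `μ` to `(E - δ₀, E + δ₀)`; the rest of `μ` contributes `O(ε^{2-α}) → 0`.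
-/

open MeasureTheory Filter Set
open scoped ENNReal Topology

lemma mem_Ioo_iff_abs_sub_lt {x E r : ℝ} : x ∈ Ioo (E - r) (E + r) ↔ |x - E| < r := by
  rw [← Real.ball_eq_Ioo, Metric.mem_ball, Real.dist_eq]

/-- `Im (x - (E + iε))⁻¹`, the integrand of `Im F_μ (E + iε)`. -/
noncomputable def imStieltjesKernel (E ε x : ℝ) : ℝ := ε / ((x - E) ^ 2 + ε ^ 2)

noncomputable def upperAlphaDeriv (μ : Measure ℝ) (α E : ℝ) : ℝ≥0∞ :=
  limsup (fun ε : ℝ => μ (Ioo (E - ε) (E + ε)) / ENNReal.ofReal ((2 * ε) ^ α)) (𝓝[>] 0)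

section ImStieltjesKernel

variable {E ε : ℝ}

lemma imStieltjesKernel_nonneg (hε : 0 ≤ ε) (x : ℝ) : 0 ≤ imStieltjesKernel E ε x := by
  unfold imStieltjesKernel
  positivity

lemma measurable_imStieltjesKernel : Measurable (imStieltjesKernel E ε) := by
  unfold imStieltjesKernel
  fun_prop

lemma imStieltjesKernel_le_div_sq (hε : 0 ≤ ε) {r x : ℝ} (hr : 0 < r)
    (h : r ^ 2 ≤ (x - E) ^ 2 + ε ^ 2) :
    imStieltjesKernel E ε x ≤ ε / r ^ 2 :=
  div_le_div_of_nonneg_left hε (by positivity) h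

lemma imStieltjesKernel_le_inv (hε : 0 < ε) (x : ℝ) : imStieltjesKernel E ε x ≤ ε⁻¹ := by
  calc imStieltjesKernel E ε x ≤ ε / ε ^ 2 :=
        imStieltjesKernel_le_div_sq hε.le hε (le_add_of_nonneg_left (sq_nonneg _))
    _ = ε⁻¹ := by rw [sq, div_mul_cancel_left₀ hε.ne']

lemma inv_two_mul_le_imStieltjesKernel {x : ℝ} (hx : x ∈ Ioo (E - ε) (E + ε)) :
    (2 * ε)⁻¹ ≤ imStieltjesKernel E ε x := by
  have hε : 0 < ε := by linarith [hx.1, hx.2]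
  have hsq : (x - E) ^ 2 < ε ^ 2 := sq_lt_sq' (by linarith [hx.1]) (by linarith [hx.2])
  rw [imStieltjesKernel, inv_le_comm₀ (by positivity) (by positivity), inv_div,
    div_le_iff₀ hε]
  nlinarith

lemma integrable_imStieltjesKernel (μ : Measure ℝ) [IsFiniteMeasure μ] (hε : 0 < ε) :
    Integrable (imStieltjesKernel E ε) μ :=
  Integrable.of_bound measurable_imStieltjesKernel.aestronglyMeasurable ε⁻¹ <|
    ae_of_all _ fun x => by
      rw [Real.norm_of_nonneg (imStieltjesKernel_nonneg hε.le x)]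
      exact imStieltjesKernel_le_inv hε x

lemma ofReal_integral_imStieltjesKernel (μ : Measure ℝ) [IsFiniteMeasure μ] (hε : 0 < ε) :
    ENNReal.ofReal (∫ x, imStieltjesKernel E ε x ∂μ) =
      ∫⁻ x, ENNReal.ofReal (imStieltjesKernel E ε x) ∂μ :=
  ofReal_integral_eq_lintegral_ofReal (integrable_imStieltjesKernel μ hε)
    (ae_of_all _ (imStieltjesKernel_nonneg hε.le))

lemma imStieltjesKernel_le_tsum_indicator (hε : 0 < ε) (x : ℝ) :
    ENNReal.ofReal (imStieltjesKernel E ε x) ≤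
      ∑' n : ℕ, (Ioo (E - 2 ^ n * ε) (E + 2 ^ n * ε)).indicator
        (fun _ => ENNReal.ofReal (4 / (4 ^ n * ε))) x := by
  classical
  have hex : ∃ n : ℕ, |x - E| < 2 ^ n * ε := by
    obtain ⟨n, hn⟩ := pow_unbounded_of_one_lt (|x - E| / ε) one_lt_two
    exact ⟨n, (div_lt_iff₀ hε).1 hn⟩
  refine le_trans ?_ (ENNReal.le_tsum (Nat.find hex))
  rw [indicator_of_mem (mem_Ioo_iff_abs_sub_lt.2 (Nat.find_spec hex))]
  refine ENNReal.ofReal_le_ofReal ?_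
  rcases hn : Nat.find hex with _ | n
  · calc imStieltjesKernel E ε x ≤ ε⁻¹ := imStieltjesKernel_le_inv hε x
      _ ≤ 4 / (4 ^ 0 * ε) := by rw [pow_zero, one_mul, inv_eq_one_div]; gcongr; norm_num
  · have hfar : 2 ^ n * ε ≤ |x - E| := not_lt.1 (Nat.find_min hex (by omega))
    have hsq : (2 ^ n * ε) ^ 2 ≤ (x - E) ^ 2 + ε ^ 2 := by
      nlinarith [sq_abs (x - E), pow_le_pow_left₀ (by positivity) hfar 2]
    calc imStieltjesKernel E ε x ≤ ε / (2 ^ n * ε) ^ 2 :=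
          imStieltjesKernel_le_div_sq hε.le (by positivity) hsq
      _ = 4 / (4 ^ (n + 1) * ε) := by
        rw [show (4 : ℝ) = 2 ^ 2 by norm_num, ← pow_mul]
        field_simp
        ring

lemma lintegral_imStieltjesKernel_le_tsum (μ : Measure ℝ) (hε : 0 < ε) :
    ∫⁻ x, ENNReal.ofReal (imStieltjesKernel E ε x) ∂μ ≤
      ∑' n : ℕ, ENNReal.ofReal (4 / (4 ^ n * ε)) * μ (Ioo (E - 2 ^ n * ε) (E + 2 ^ n * ε)) :=
  calc ∫⁻ x, ENNReal.ofReal (imStieltjesKernel E ε x) ∂μ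
      ≤ ∫⁻ x, ∑' n : ℕ, (Ioo (E - 2 ^ n * ε) (E + 2 ^ n * ε)).indicator
          (fun _ => ENNReal.ofReal (4 / (4 ^ n * ε))) x ∂μ :=
        lintegral_mono (imStieltjesKernel_le_tsum_indicator hε)
    _ = _ := by
        rw [lintegral_tsum fun n => (measurable_const.indicator measurableSet_Ioo).aemeasurable]
        simp only [lintegral_indicator_const measurableSet_Ioo]

lemma rpow_mul_div_mul_rpow_le {α : ℝ} (hα : α ≤ 1) (hε : 0 < ε) (n : ℕ) :
    ε ^ (1 - α) * (4 / (4 ^ n * ε)) * (2 * (2 ^ n * ε)) ^ α ≤ 8 * (1 / 2) ^ n := by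
  have hpow : (2 * (2 ^ n * ε)) ^ α ≤ 2 ^ (n + 1) * ε ^ α := by
    rw [show 2 * (2 ^ n * ε) = (2 : ℝ) ^ (n + 1) * ε by ring, Real.mul_rpow (by positivity) hε.le]
    gcongr
    exact Real.rpow_le_self_of_one_le (one_le_pow₀ one_le_two) hα
  calc ε ^ (1 - α) * (4 / (4 ^ n * ε)) * (2 * (2 ^ n * ε)) ^ α
      ≤ ε ^ (1 - α) * (4 / (4 ^ n * ε)) * (2 ^ (n + 1) * ε ^ α) := by gcongr
    _ = 8 * (1 / 2) ^ n := by
      rw [Real.rpow_sub hε, Real.rpow_one, one_div_pow,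
        show (4 : ℝ) ^ n = 2 ^ n * 2 ^ n by rw [← mul_pow]; norm_num]
      field_simp
      ring

lemma ofReal_rpow_mul_lintegral_imStieltjesKernel_le {α : ℝ} (hα : α ≤ 1) (μ : Measure ℝ)
    {L : ℝ≥0∞} (hμ : ∀ δ > 0, μ (Ioo (E - δ) (E + δ)) ≤ L * ENNReal.ofReal ((2 * δ) ^ α))
    (hε : 0 < ε) :
    ENNReal.ofReal (ε ^ (1 - α)) * ∫⁻ x, ENNReal.ofReal (imStieltjesKernel E ε x) ∂μ ≤ 16 * L :=
  calc ENNReal.ofReal (ε ^ (1 - α)) * ∫⁻ x, ENNReal.ofReal (imStieltjesKernel E ε x) ∂μ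
      ≤ ENNReal.ofReal (ε ^ (1 - α)) * ∑' n : ℕ, ENNReal.ofReal (4 / (4 ^ n * ε)) *
          (L * ENNReal.ofReal ((2 * (2 ^ n * ε)) ^ α)) := by
        gcongr
        refine (lintegral_imStieltjesKernel_le_tsum μ hε).trans (ENNReal.tsum_le_tsum fun n => ?_)
        gcongr
        exact hμ _ (by positivity)
    _ = L * ∑' n : ℕ,
          ENNReal.ofReal (ε ^ (1 - α) * (4 / (4 ^ n * ε)) * (2 * (2 ^ n * ε)) ^ α) := by
        rw [← ENNReal.tsum_mul_left, ← ENNReal.tsum_mul_left]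
        refine tsum_congr fun n => ?_
        rw [ENNReal.ofReal_mul (by positivity), ENNReal.ofReal_mul (by positivity)]
        ring
    _ ≤ L * ∑' n : ℕ, ENNReal.ofReal (8 * (1 / 2) ^ n) := by
        gcongr L * ?_
        exact ENNReal.tsum_le_tsum fun n =>
          ENNReal.ofReal_le_ofReal (rpow_mul_div_mul_rpow_le hα hε n)
    _ = 16 * L := by
        rw [← ENNReal.ofReal_tsum_of_nonneg (fun n => by positivity)
          (summable_geometric_two.mul_left 8), tsum_mul_left, tsum_geometric_two, mul_comm]
        norm_num

lemma setLIntegral_compl_imStieltjesKernel_le (μ : Measure ℝ) (hε : 0 < ε) {δ : ℝ}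
    (hδ : 0 < δ) :
    ∫⁻ x in (Ioo (E - δ) (E + δ))ᶜ, ENNReal.ofReal (imStieltjesKernel E ε x) ∂μ ≤
      ENNReal.ofReal (ε / δ ^ 2) * μ (Ioo (E - δ) (E + δ))ᶜ := by
  rw [← setLIntegral_const]
  refine setLIntegral_mono measurable_const fun x hx => ENNReal.ofReal_le_ofReal ?_
  have hfar : δ ≤ |x - E| := not_lt.1 fun h => hx (mem_Ioo_iff_abs_sub_lt.2 h)
  refine imStieltjesKernel_le_div_sq hε.le hδ ?_
  nlinarith [sq_abs (x - E), pow_le_pow_left₀ hδ.le hfar 2]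

lemma measure_Ioo_le_lintegral_imStieltjesKernel (μ : Measure ℝ) :
    ENNReal.ofReal (2 * ε)⁻¹ * μ (Ioo (E - ε) (E + ε)) ≤
      ∫⁻ x, ENNReal.ofReal (imStieltjesKernel E ε x) ∂μ :=
  calc ENNReal.ofReal (2 * ε)⁻¹ * μ (Ioo (E - ε) (E + ε))
      = ∫⁻ _ in Ioo (E - ε) (E + ε), ENNReal.ofReal (2 * ε)⁻¹ ∂μ := (setLIntegral_const _ _).symm
    _ ≤ ∫⁻ x in Ioo (E - ε) (E + ε), ENNReal.ofReal (imStieltjesKernel E ε x) ∂μ :=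
        setLIntegral_mono measurable_imStieltjesKernel.ennreal_ofReal fun _ hx =>
          ENNReal.ofReal_le_ofReal (inv_two_mul_le_imStieltjesKernel hx)
    _ ≤ _ := setLIntegral_le_lintegral _ _

lemma half_div_rpow_le {α : ℝ} (hα : 0 ≤ α) (hε : 0 < ε) :
    1 / 2 / (2 * ε) ^ α ≤ ε ^ (1 - α) * (2 * ε)⁻¹ := by
  calc 1 / 2 / (2 * ε) ^ α ≤ 1 / 2 / ε ^ α := by
        gcongr
        linarith
    _ = ε ^ (1 - α) * (2 * ε)⁻¹ := by
        rw [Real.rpow_sub hε, Real.rpow_one]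
        field_simp

end ImStieltjesKernel

lemma restrict_Ioo_apply_Ioo_le {α : ℝ} (hα : 0 ≤ α) {μ : Measure ℝ} {E δ₀ : ℝ} {L : ℝ≥0∞}
    (hδ₀ : 0 < δ₀) (hμ : ∀ δ ∈ Ioc 0 δ₀, μ (Ioo (E - δ) (E + δ)) ≤ L * ENNReal.ofReal ((2 * δ) ^ α))
    {δ : ℝ} (hδ : 0 < δ) :
    μ.restrict (Ioo (E - δ₀) (E + δ₀)) (Ioo (E - δ) (E + δ)) ≤
      L * ENNReal.ofReal ((2 * δ) ^ α) := by
  rcases le_total δ δ₀ with h | h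
  · exact (Measure.restrict_apply_le _ _).trans (hμ δ ⟨hδ, h⟩)
  · calc μ.restrict (Ioo (E - δ₀) (E + δ₀)) (Ioo (E - δ) (E + δ)) ≤ μ (Ioo (E - δ₀) (E + δ₀)) :=
          (measure_mono (subset_univ _)).trans_eq (Measure.restrict_apply_univ _)
      _ ≤ L * ENNReal.ofReal ((2 * δ₀) ^ α) := hμ δ₀ ⟨hδ₀, le_rfl⟩
      _ ≤ L * ENNReal.ofReal ((2 * δ) ^ α) := by gcongr

section Limsup

variable {α : ℝ} (μ : Measure ℝ) [IsFiniteMeasure μ] (E : ℝ)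

lemma ofReal_rpow_mul_integral_imStieltjesKernel {ε : ℝ} (hε : 0 < ε) :
    ENNReal.ofReal (ε ^ (1 - α) * ∫ x, imStieltjesKernel E ε x ∂μ) =
      ENNReal.ofReal (ε ^ (1 - α)) * ∫⁻ x, ENNReal.ofReal (imStieltjesKernel E ε x) ∂μ := by
  rw [ENNReal.ofReal_mul (by positivity), ofReal_integral_imStieltjesKernel μ hε]

theorem ofReal_half_mul_upperAlphaDeriv_le (hα : 0 ≤ α) :
    ENNReal.ofReal (1 / 2) * upperAlphaDeriv μ α E ≤
      limsup (fun ε => ENNReal.ofReal (ε ^ (1 - α) * ∫ x, imStieltjesKernel E ε x ∂μ))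
        (𝓝[>] 0) := by
  rw [upperAlphaDeriv, ← ENNReal.limsup_const_mul_of_ne_top ENNReal.ofReal_ne_top]
  refine limsup_le_limsup ?_
  filter_upwards [self_mem_nhdsWithin] with ε (hε : 0 < ε)
  rw [ofReal_rpow_mul_integral_imStieltjesKernel μ E hε]
  calc ENNReal.ofReal (1 / 2) * (μ (Ioo (E - ε) (E + ε)) / ENNReal.ofReal ((2 * ε) ^ α))
      = ENNReal.ofReal (1 / 2 / (2 * ε) ^ α) * μ (Ioo (E - ε) (E + ε)) := by
        rw [ENNReal.ofReal_div_of_pos (y := (2 * ε) ^ α) (by positivity), ENNReal.div_eq_inv_mul,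
          ENNReal.div_eq_inv_mul]
        ring
    _ ≤ ENNReal.ofReal (ε ^ (1 - α) * (2 * ε)⁻¹) * μ (Ioo (E - ε) (E + ε)) := by
        gcongr
        exact half_div_rpow_le hα hε
    _ = ENNReal.ofReal (ε ^ (1 - α)) * (ENNReal.ofReal (2 * ε)⁻¹ * μ (Ioo (E - ε) (E + ε))) := by
        rw [ENNReal.ofReal_mul (by positivity), mul_assoc]
    _ ≤ _ := by
        gcongr
        exact measure_Ioo_le_lintegral_imStieltjesKernel μ

lemma limsup_rpow_mul_integral_imStieltjesKernel_le_of_lt (hα0 : 0 ≤ α) (hα1 : α ≤ 1)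
    {L : ℝ≥0∞} (hL : upperAlphaDeriv μ α E < L) :
    limsup (fun ε => ENNReal.ofReal (ε ^ (1 - α) * ∫ x, imStieltjesKernel E ε x ∂μ)) (𝓝[>] 0) ≤
      16 * L := by
  obtain ⟨δ₀, hδ₀, hratio⟩ :=
    (nhdsGT_basis_Ioc (0 : ℝ)).eventually_iff.1 (eventually_lt_of_limsup_lt hL)
  have hnear : ∀ δ ∈ Ioc 0 δ₀, μ (Ioo (E - δ) (E + δ)) ≤ L * ENNReal.ofReal ((2 * δ) ^ α) := by
    intro δ hδ
    have hpos : ENNReal.ofReal ((2 * δ) ^ α) ≠ 0 :=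
      (ENNReal.ofReal_pos.2 (by have := hδ.1; positivity)).ne'
    exact ((ENNReal.div_lt_iff (Or.inl hpos) (Or.inl ENNReal.ofReal_ne_top)).1 (hratio hδ)).le
  set s : Set ℝ := Ioo (E - δ₀) (E + δ₀)
  have hsplit : ∀ ε > 0, ENNReal.ofReal (ε ^ (1 - α) * ∫ x, imStieltjesKernel E ε x ∂μ) ≤
      16 * L + ENNReal.ofReal (ε ^ (1 - α) * (ε / δ₀ ^ 2)) * μ sᶜ := by
    intro ε hε
    rw [ofReal_rpow_mul_integral_imStieltjesKernel μ E hε,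
      ← lintegral_add_compl _ measurableSet_Ioo, mul_add]
    refine add_le_add (ofReal_rpow_mul_lintegral_imStieltjesKernel_le hα1 _
      (fun δ hδ => restrict_Ioo_apply_Ioo_le hα0 hδ₀ hnear hδ) hε) ?_
    rw [ENNReal.ofReal_mul (by positivity), mul_assoc]
    gcongr
    exact setLIntegral_compl_imStieltjesKernel_le μ hε hδ₀
  have hfar : Tendsto (fun ε => ENNReal.ofReal (ε ^ (1 - α) * (ε / δ₀ ^ 2)) * μ sᶜ)
      (𝓝[>] 0) (𝓝 0) := by
    have hreal : Tendsto (fun ε : ℝ => ε ^ (1 - α) * (ε / δ₀ ^ 2)) (𝓝 0) (𝓝 0) := by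
      simpa using (Real.continuousAt_rpow_const 0 (1 - α) (Or.inr (by linarith))).tendsto.mul
        ((continuous_id.div_const (δ₀ ^ 2)).tendsto 0)
    simpa using ENNReal.Tendsto.mul_const
      (ENNReal.tendsto_ofReal (hreal.mono_left nhdsWithin_le_nhds)) (Or.inr (measure_ne_top μ sᶜ))
  calc limsup (fun ε => ENNReal.ofReal (ε ^ (1 - α) * ∫ x, imStieltjesKernel E ε x ∂μ)) (𝓝[>] 0)
      ≤ limsup (fun ε => 16 * L + ENNReal.ofReal (ε ^ (1 - α) * (ε / δ₀ ^ 2)) * μ sᶜ)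
          (𝓝[>] 0) :=
        limsup_le_limsup (eventually_nhdsWithin_of_forall hsplit)
    _ = 16 * L := by simpa using (tendsto_const_nhds.add hfar).limsup_eq

theorem limsup_rpow_mul_integral_imStieltjesKernel_le (hα0 : 0 ≤ α) (hα1 : α ≤ 1) :
    limsup (fun ε => ENNReal.ofReal (ε ^ (1 - α) * ∫ x, imStieltjesKernel E ε x ∂μ)) (𝓝[>] 0) ≤
      16 * upperAlphaDeriv μ α E := by
  rw [mul_comm, ← ENNReal.div_le_iff (by norm_num) (by norm_num)]
  refine le_of_forall_gt_imp_ge_of_dense fun L hL => ?_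
  rw [ENNReal.div_le_iff (by norm_num) (by norm_num), mul_comm]
  exact limsup_rpow_mul_integral_imStieltjesKernel_le_of_lt μ E hα0 hα1 hL

end Limsup

/-- Two-sided comparison between the upper `α`-derivative of a finite compactly
supported measure and the boundary behaviour `ε^{1-α} Im F_μ(E+iε)` of its
Stieltjes transform, with constants depending only on `α`. -/
theorem stmt16 (α : ℝ) (hα0 : 0 < α) (hα1 : α ≤ 1) :
    ∃ C₁ C₂ : ℝ, 0 < C₁ ∧ 0 < C₂ ∧
      ∀ (μ : Measure ℝ), IsFiniteMeasure μ →
        (∃ R : ℝ, μ {x : ℝ | R < |x|} = 0) →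
        ∀ E : ℝ,
          ENNReal.ofReal C₁ *
              Filter.limsup (fun ε : ℝ =>
                μ (Set.Ioo (E - ε) (E + ε)) / ENNReal.ofReal ((2 * ε) ^ α))
                (nhdsWithin 0 (Set.Ioi 0)) ≤
            Filter.limsup (fun ε : ℝ =>
              ENNReal.ofReal (ε ^ (1 - α) * ∫ x, ε / ((x - E) ^ 2 + ε ^ 2) ∂μ))
              (nhdsWithin 0 (Set.Ioi 0)) ∧
          Filter.limsup (fun ε : ℝ =>
              ENNReal.ofReal (ε ^ (1 - α) * ∫ x, ε / ((x - E) ^ 2 + ε ^ 2) ∂μ))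
              (nhdsWithin 0 (Set.Ioi 0)) ≤
            ENNReal.ofReal C₂ *
              Filter.limsup (fun ε : ℝ =>
                μ (Set.Ioo (E - ε) (E + ε)) / ENNReal.ofReal ((2 * ε) ^ α))
                (nhdsWithin 0 (Set.Ioi 0)) := by
  refine ⟨1 / 2, 16, by norm_num, by norm_num, fun μ _ _ E => ⟨?_, ?_⟩⟩
  · exact ofReal_half_mul_upperAlphaDeriv_le μ E hα0.le
  · rw [ENNReal.ofReal_ofNat]
    exact limsup_rpow_mul_integral_imStieltjesKernel_le μ E hα0.le hα1
end

section
/- Let H be a self-adjoint operator on ℓ²(ℤ), E ∈ ℝ, ε > 0, u : ℤ → ℂ a bounded sequence with (H - E)u = 0 (as a generalized eigenfunction), φ ∈ ℓ²(ℤ), and set v_ε = (H - E - iε)⁻¹ φ. Then for any integers 0 < R₀ < R, |Σ_{r=R₀}^{R} W_{[-r,r]}(v_ε, u)| ≥ |Σ_{r=R₀}^{R} ⟨φ, u⟩_r| − ε·R·‖v_ε‖_{ℓ²(2R)}·‖u‖_{ℓ²(2R)}, where ⟨f,g⟩_r = Σ_{n=-r}^{r} f_n conj(g_n), W_{[-r,r]}(f,g)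 = ⟨Hf, g⟩_r − ⟨f, Hg⟩_r, and ‖f‖_{ℓ²(N)}² = Σ_{|n|≤N} |f_n|². -/
open Finset

set_option maxHeartbeats 1000000

/-- Lower bound on the summed Lagrange bilinear form of the resolvent vector
`v_ε = (H - E - iε)⁻¹ φ` against a bounded generalized eigenfunction `u`. -/
theorem stmt17 (w : ℤ → ℂ) (hwsym : ∀ k : ℤ, (starRingEnd ℂ) (w (-k)) = w k)
    (hwsum : Summable fun k : ℤ => ‖w k‖)
    (v : ℤ → ℝ) (hv : ∃ M : ℝ, ∀ n, |v n| ≤ M)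
    (H : (ℤ → ℂ) → (ℤ → ℂ))
    (hH : ∀ (f : ℤ → ℂ) (n : ℤ),
      H f n = (∑' k : ℤ, w k * f (n + k)) + (v n : ℂ) * f n)
    (E ε : ℝ) (hε : 0 < ε)
    (u : ℤ → ℂ) (hu : ∃ M : ℝ, ∀ n, ‖u n‖ ≤ M)
    (hue : ∀ n : ℤ, H u n = (E : ℂ) * u n)
    (φ vε : ℤ → ℂ) (hvb : ∃ M : ℝ, ∀ n, ‖vε n‖ ≤ M)
    (hres : ∀ n : ℤ, H vε n - ((E : ℂ) + Complex.I * ε) * vε n = φ n)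
    (W ip : ℕ → ℂ)
    (hW : ∀ r : ℕ, W r = (∑ n ∈ Finset.Icc (-(r : ℤ)) r,
        H vε n * (starRingEnd ℂ) (u n)) -
      ∑ n ∈ Finset.Icc (-(r : ℤ)) r, vε n * (starRingEnd ℂ) (H u n))
    (hip : ∀ r : ℕ, ip r = ∑ n ∈ Finset.Icc (-(r : ℤ)) r,
      φ n * (starRingEnd ℂ) (u n))
    (R₀ R : ℕ) (hR₀ : 0 < R₀) (hRR : R₀ < R) :
    ‖∑ r ∈ Finset.Icc R₀ R, W r‖ ≥
      ‖∑ r ∈ Finset.Icc R₀ R, ip r‖ -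
        ε * R *
          Real.sqrt (∑ n ∈ Finset.Icc (-(2 * R : ℤ)) (2 * R), ‖vε n‖ ^ 2) *
          Real.sqrt (∑ n ∈ Finset.Icc (-(2 * R : ℤ)) (2 * R), ‖u n‖ ^ 2) := by
  set A := Real.sqrt (∑ n ∈ Finset.Icc (-(2 * R : ℤ)) (2 * R), ‖vε n‖ ^ 2) with hA
  set B := Real.sqrt (∑ n ∈ Finset.Icc (-(2 * R : ℤ)) (2 * R), ‖u n‖ ^ 2) with hB
  have hA0 : 0 ≤ A := Real.sqrt_nonneg _
  have hB0 : 0 ≤ B := Real.sqrt_nonneg _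
  -- key identity
  have key : ∀ r : ℕ, W r = ip r + Complex.I * ε *
      ∑ n ∈ Finset.Icc (-(r : ℤ)) r, vε n * (starRingEnd ℂ) (u n) := by
    intro r
    rw [hW, hip]
    have h1 : ∀ n : ℤ, H vε n = φ n + ((E : ℂ) + Complex.I * ε) * vε n := by
      intro n; linear_combination hres n
    have h2 : ∀ n : ℤ, (starRingEnd ℂ) (H u n) = (E : ℂ) * (starRingEnd ℂ) (u n) := by
      intro n; rw [hue n, map_mul, Complex.conj_ofReal]
    calc (∑ n ∈ Finset.Icc (-(r : ℤ)) r, H vε n * (starRingEnd ℂ) (u n)) -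
          ∑ n ∈ Finset.Icc (-(r : ℤ)) r, vε n * (starRingEnd ℂ) (H u n)
        = ∑ n ∈ Finset.Icc (-(r : ℤ)) r, (φ n * (starRingEnd ℂ) (u n) +
            Complex.I * ε * (vε n * (starRingEnd ℂ) (u n))) := by
          rw [← Finset.sum_sub_distrib]
          refine Finset.sum_congr rfl fun n _ => ?_
          rw [h1 n, h2 n]; ring
      _ = _ := by rw [Finset.sum_add_distrib, ← Finset.mul_sum]
  -- per-r Cauchy-Schwarz bound
  have per : ∀ r ∈ Finset.Icc R₀ R,
      ‖∑ n ∈ Finset.Icc (-(r : ℤ)) r, vε n * (starRingEnd ℂ) (u n)‖ ≤ A * B := by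
    intro r hr
    have hrR : (r : ℤ) ≤ 2 * R := by
      have := (Finset.mem_Icc.mp hr).2
      omega
    have hsub : Finset.Icc (-(r : ℤ)) r ⊆ Finset.Icc (-(2 * R : ℤ)) (2 * R) := by
      intro n hn
      simp only [Finset.mem_Icc] at *
      omega
    calc ‖∑ n ∈ Finset.Icc (-(r : ℤ)) r, vε n * (starRingEnd ℂ) (u n)‖
        ≤ ∑ n ∈ Finset.Icc (-(r : ℤ)) r, ‖vε n‖ * ‖u n‖ := by
          refine (norm_sum_le _ _).trans (le_of_eq (Finset.sum_congr rfl fun n _ => ?_))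
          rw [norm_mul, RCLike.norm_conj]
      _ ≤ Real.sqrt (∑ n ∈ Finset.Icc (-(r : ℤ)) r, ‖vε n‖ ^ 2) *
            Real.sqrt (∑ n ∈ Finset.Icc (-(r : ℤ)) r, ‖u n‖ ^ 2) :=
          Real.sum_mul_le_sqrt_mul_sqrt _ _ _
      _ ≤ A * B := by
          rw [hA, hB]
          exact mul_le_mul
            (Real.sqrt_le_sqrt
              (Finset.sum_le_sum_of_subset_of_nonneg hsub fun n _ _ => by positivity))
            (Real.sqrt_le_sqrt
              (Finset.sum_le_sum_of_subset_of_nonneg hsub fun n _ _ => by positivity))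
            (Real.sqrt_nonneg _) (Real.sqrt_nonneg _)
  -- bound on the sum of inner products
  set S := ∑ r ∈ Finset.Icc R₀ R, ∑ n ∈ Finset.Icc (-(r : ℤ)) r,
      vε n * (starRingEnd ℂ) (u n) with hSdef
  have hS : ‖S‖ ≤ R * (A * B) := by
    calc ‖S‖ ≤ ∑ r ∈ Finset.Icc R₀ R,
          ‖∑ n ∈ Finset.Icc (-(r : ℤ)) r, vε n * (starRingEnd ℂ) (u n)‖ :=
        norm_sum_le _ _
      _ ≤ ∑ _r ∈ Finset.Icc R₀ R, (A * B) := Finset.sum_le_sum per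
      _ = ((Finset.Icc R₀ R).card : ℝ) * (A * B) := by
          rw [Finset.sum_const, nsmul_eq_mul]
      _ ≤ R * (A * B) := by
          have hcard : (Finset.Icc R₀ R).card ≤ R := by
            rw [Nat.card_Icc]; omega
          have : ((Finset.Icc R₀ R).card : ℝ) ≤ R := by exact_mod_cast hcard
          exact mul_le_mul_of_nonneg_right this (mul_nonneg hA0 hB0)
  have hsplit : ∑ r ∈ Finset.Icc R₀ R, W r =
      (∑ r ∈ Finset.Icc R₀ R, ip r) + Complex.I * ε * S := by
    rw [hSdef, Finset.mul_sum, ← Finset.sum_add_distrib]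
    exact Finset.sum_congr rfl fun r _ => key r
  have hnormIS : ‖Complex.I * ε * S‖ = ε * ‖S‖ := by
    rw [norm_mul, norm_mul, Complex.norm_I, Complex.norm_real, Real.norm_eq_abs,
      abs_of_pos hε, one_mul]
  have h3 : ‖∑ r ∈ Finset.Icc R₀ R, ip r‖ - ‖Complex.I * ε * S‖ ≤
      ‖∑ r ∈ Finset.Icc R₀ R, W r‖ := by
    rw [hsplit]
    calc ‖∑ r ∈ Finset.Icc R₀ R, ip r‖ - ‖Complex.I * ε * S‖
        ≤ ‖(∑ r ∈ Finset.Icc R₀ R, ip r) - -(Complex.I * ε * S)‖ := by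
          simpa [norm_neg] using
            norm_sub_norm_le (∑ r ∈ Finset.Icc R₀ R, ip r) (-(Complex.I * ε * S))
      _ = _ := by rw [sub_neg_eq_add]
  have h4 : ε * ‖S‖ ≤ ε * R * A * B := by
    calc ε * ‖S‖ ≤ ε * (R * (A * B)) := mul_le_mul_of_nonneg_left hS hε.le
      _ = ε * R * A * B := by ring
  rw [ge_iff_le]
  calc ‖∑ r ∈ Finset.Icc R₀ R, ip r‖ - ε * R * A * B
      ≤ ‖∑ r ∈ Finset.Icc R₀ R, ip r‖ - ε * ‖S‖ := by linarith
    _ ≤ ‖∑ r ∈ Finset.Icc R₀ R, W r‖ := by rw [← hnormIS]; exact h3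
end
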